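/- arXiv:1509.01486 — 4 statements merged into one kernel-verified Lean document; each statement's English description precedes it below -/
import Mathlib

section
/- Let r ∈ (0,1). If z satisfies |z| ≤ r, |z| < 1 and S(z) = 0 (i.e., z ∈ D_r \ ℬ), then R_n(z) = 0 for all sufficiently large n. -/
open Filter Topology

set_option maxHeartbeats 1000000 in
/-- For `r ∈ (0,1)`, if `|z| ≤ r` and `S(z) = 0` (i.e. `z ∈ D_r \ ℬ`),
then `R_n(z) = 0` for all sufficiently large `n`. -/
theorem stmt_3
    (p : ℕ → ℝ) (hp0 : p 0 = 0) (hp1 : 0 < p 1) (hp1' : p 1 < 1)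
    (hpnn : ∀ k, 0 ≤ p k) (hpsum : ∑' k, p k = 1)
    (hmean : Summable fun k : ℕ => (k : ℝ) * p k)
    (a : ℝ) (ha : a = ∑' k : ℕ, (k : ℝ) * p k) (ha1 : 1 < a)
    (f : ℂ → ℂ) (hf : ∀ z : ℂ, ‖z‖ ≤ 1 → f z = ∑' n, (p n : ℂ) * z ^ n)
    (fIter : ℕ → ℂ → ℂ) (hf0 : ∀ z, fIter 0 z = z)
    (hfS : ∀ n z, fIter (n + 1) z = f (fIter n z))
    (S : ℂ → ℂ)
    (hS : ∀ z : ℂ, ‖z‖ < 1 →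
      Tendsto (fun n => fIter n z / (p 1 : ℂ) ^ n) atTop (𝓝 (S z)))
    (R : ℕ → ℂ → ℂ)
    (hR : ∀ n z, R n z = S z - ((p 1 : ℂ) ^ n)⁻¹ * fIter n z)
    (r : ℝ) (hr0 : 0 < r) (hr1 : r < 1) :
    ∀ z : ℂ, ‖z‖ ≤ r → S z = 0 → ∃ N : ℕ, ∀ n ≥ N, R n z = 0 := by
  intro z hzr hSz
  have hpnorm : ∀ n : ℕ, ‖((p n : ℝ) : ℂ)‖ = p n := fun n => by
    rw [Complex.norm_real, Real.norm_eq_abs, abs_of_nonneg (hpnn n)]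
  -- summability of p
  have hpsummable : Summable p := by
    refine Summable.of_nonneg_of_le hpnn (fun k => ?_) hmean
    match k with
    | 0 => simp [hp0]
    | (k+1) =>
      have h1 : (1:ℝ) ≤ ((k+1 : ℕ) : ℝ) := by exact_mod_cast Nat.succ_le_succ (Nat.zero_le k)
      nlinarith [hpnn (k+1)]
  -- summability of the series defining f
  have hsumw : ∀ w : ℂ, ‖w‖ ≤ 1 → Summable (fun n => ((p n : ℝ) : ℂ) * w ^ n) := by
    intro w hw
    refine Summable.of_norm (Summable.of_nonneg_of_le (fun n => norm_nonneg _)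
      (fun n => ?_) hpsummable)
    rw [norm_mul, norm_pow, hpnorm]
    calc p n * ‖w‖ ^ n ≤ p n * 1 := by
          refine mul_le_mul_of_nonneg_left ?_ (hpnn n)
          exact pow_le_one₀ (norm_nonneg w) hw
      _ = p n := mul_one _
  -- upper bound ‖f w‖ ≤ ‖w‖ for ‖w‖ ≤ 1
  have hfle : ∀ w : ℂ, ‖w‖ ≤ 1 → ‖f w‖ ≤ ‖w‖ := by
    intro w hw
    rw [hf w hw]
    have hns : Summable (fun n => ‖((p n : ℝ) : ℂ) * w ^ n‖) := by
      refine Summable.of_nonneg_of_le (fun n => norm_nonneg _) (fun n => ?_) hpsummable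
      rw [norm_mul, norm_pow, hpnorm]
      calc p n * ‖w‖ ^ n ≤ p n * 1 := by
            exact mul_le_mul_of_nonneg_left (pow_le_one₀ (norm_nonneg w) hw) (hpnn n)
        _ = p n := mul_one _
    calc ‖∑' n, ((p n : ℝ) : ℂ) * w ^ n‖ ≤ ∑' n, ‖((p n : ℝ) : ℂ) * w ^ n‖ :=
          norm_tsum_le_tsum_norm hns
      _ ≤ ∑' n, p n * ‖w‖ := by
          refine Summable.tsum_le_tsum (fun n => ?_) hns (hpsummable.mul_right ‖w‖)
          rw [norm_mul, norm_pow, hpnorm]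
          match n with
          | 0 => simp [hp0]
          | (k+1) =>
            refine mul_le_mul_of_nonneg_left ?_ (hpnn (k+1))
            calc ‖w‖ ^ (k+1) = ‖w‖ ^ k * ‖w‖ := by ring
              _ ≤ 1 * ‖w‖ := by
                  exact mul_le_mul_of_nonneg_right (pow_le_one₀ (norm_nonneg w) hw)
                    (norm_nonneg w)
              _ = ‖w‖ := one_mul _
      _ = (∑' n, p n) * ‖w‖ := tsum_mul_right
      _ = ‖w‖ := by rw [hpsum, one_mul]
  -- f 0 = 0
  have hfzero : f 0 = 0 := by
    rw [hf 0 (by simp)]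
    rw [tsum_eq_single 0 (fun n hn => by simp [zero_pow hn])]
    simp [hp0]
  -- lower bound ‖f w‖ ≥ p1 ‖w‖ - ‖w‖^2 for ‖w‖ ≤ 1
  have hfge : ∀ w : ℂ, ‖w‖ ≤ 1 → p 1 * ‖w‖ - ‖w‖ ^ 2 ≤ ‖f w‖ := by
    intro w hw
    have hsum := hsumw w hw
    have hsum1 : Summable (fun n => ((p (n+1) : ℝ) : ℂ) * w ^ (n+1)) :=
      (summable_nat_add_iff (f := fun n => ((p n : ℝ) : ℂ) * w ^ n) 1).2 hsum
    have hsum2 : Summable (fun n => ((p (n+2) : ℝ) : ℂ) * w ^ (n+2)) :=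
      (summable_nat_add_iff (f := fun n => ((p (n+1) : ℝ) : ℂ) * w ^ (n+1)) 1).2 hsum1
    have hdecomp : f w = (p 1 : ℂ) * w + ∑' n, ((p (n+2) : ℝ) : ℂ) * w ^ (n+2) := by
      rw [hf w hw, Summable.tsum_eq_zero_add hsum, Summable.tsum_eq_zero_add hsum1]
      simp [hp0]
    -- bound on the tail
    have htailp : Summable (fun n => p (n+2)) :=
      (summable_nat_add_iff (f := p) 2).2 hpsummable
    have htailsum : ∑' n, p (n+2) ≤ 1 := by
      have h1 : ∑' n, p n = p 0 + ∑' n, p (n+1) := Summable.tsum_eq_zero_add hpsummable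
      have h2 : ∑' n, p (n+1) = p 1 + ∑' n, p (n+2) :=
        Summable.tsum_eq_zero_add ((summable_nat_add_iff (f := p) 1).2 hpsummable)
      rw [hpsum] at h1
      nlinarith
    have htail : ‖∑' n, ((p (n+2) : ℝ) : ℂ) * w ^ (n+2)‖ ≤ ‖w‖ ^ 2 := by
      have hns : Summable (fun n => ‖((p (n+2) : ℝ) : ℂ) * w ^ (n+2)‖) := hsum2.norm
      calc ‖∑' n, ((p (n+2) : ℝ) : ℂ) * w ^ (n+2)‖
          ≤ ∑' n, ‖((p (n+2) : ℝ) : ℂ) * w ^ (n+2)‖ := norm_tsum_le_tsum_norm hns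
        _ ≤ ∑' n, p (n+2) * ‖w‖ ^ 2 := by
            refine Summable.tsum_le_tsum (fun n => ?_) hns (htailp.mul_right _)
            rw [norm_mul, norm_pow, hpnorm]
            refine mul_le_mul_of_nonneg_left ?_ (hpnn (n+2))
            calc ‖w‖ ^ (n+2) = ‖w‖ ^ n * ‖w‖ ^ 2 := by ring
              _ ≤ 1 * ‖w‖ ^ 2 := by
                  exact mul_le_mul_of_nonneg_right (pow_le_one₀ (norm_nonneg w) hw)
                    (by positivity)
              _ = ‖w‖ ^ 2 := one_mul _
        _ = (∑' n, p (n+2)) * ‖w‖ ^ 2 := tsum_mul_right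
        _ ≤ 1 * ‖w‖ ^ 2 := by
            exact mul_le_mul_of_nonneg_right htailsum (by positivity)
        _ = ‖w‖ ^ 2 := one_mul _
    have h1 : ‖(p 1 : ℂ) * w‖ = p 1 * ‖w‖ := by rw [norm_mul, hpnorm]
    have h2 : ‖(p 1 : ℂ) * w‖ ≤ ‖f w‖ + ‖∑' n, ((p (n+2) : ℝ) : ℂ) * w ^ (n+2)‖ := by
      calc ‖(p 1 : ℂ) * w‖
          = ‖f w - ∑' n, ((p (n+2) : ℝ) : ℂ) * w ^ (n+2)‖ := by rw [hdecomp]; congr 1; ring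
        _ ≤ ‖f w‖ + ‖∑' n, ((p (n+2) : ℝ) : ℂ) * w ^ (n+2)‖ := norm_sub_le _ _
    rw [h1] at h2
    linarith
  -- all iterates stay in the disc of radius r ≤ 1
  have hr1' : r ≤ 1 := le_of_lt hr1
  have hiterle : ∀ n, ‖fIter n z‖ ≤ r := by
    intro n
    induction n with
    | zero => rw [hf0]; exact hzr
    | succ n ih =>
      rw [hfS]
      exact le_trans (hfle _ (le_trans ih hr1')) ih
  have hiterle1 : ∀ n, ‖fIter n z‖ ≤ 1 := fun n => le_trans (hiterle n) hr1'
  -- the normalized iterates tend to 0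
  have h1 : Tendsto (fun n => fIter n z / (p 1 : ℂ) ^ n) atTop (𝓝 0) := by
    have := hS z (lt_of_le_of_lt hzr hr1)
    rwa [hSz] at this
  have hnormeq : ∀ n : ℕ, ‖fIter n z / (p 1 : ℂ) ^ n‖ = ‖fIter n z‖ / p 1 ^ n := by
    intro n
    rw [norm_div, norm_pow, hpnorm]
  have hc0 : Tendsto (fun n => ‖fIter n z‖ / p 1 ^ n) atTop (𝓝 0) := by
    have := h1.norm
    simp only [norm_zero] at this
    exact this.congr hnormeq
  by_cases hexz : ∃ N, fIter N z = 0
  · obtain ⟨N, hN⟩ := hexz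
    refine ⟨N, fun n hn => ?_⟩
    have hz0 : fIter n z = 0 := by
      induction n, hn using Nat.le_induction with
      | base => exact hN
      | succ n hn ih => rw [hfS, ih, hfzero]
    rw [hR, hz0, hSz]
    simp
  · push_neg at hexz
    exfalso
    set ε : ℝ := p 1 * (1 - p 1) / 2 with hε
    have hεpos : 0 < ε := by
      have : 0 < 1 - p 1 := by linarith
      positivity
    obtain ⟨N, hNe⟩ : ∃ N, ∀ n ≥ N, ‖fIter n z‖ / p 1 ^ n ≤ ε :=
      eventually_atTop.mp (hc0.eventually (eventually_le_nhds hεpos))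
    have hp1pow : ∀ n : ℕ, (0:ℝ) < p 1 ^ n := fun n => pow_pos hp1 n
    -- small bound on iterates past N
    have hsmall : ∀ n ≥ N, ‖fIter n z‖ ≤ ε * p 1 ^ n := by
      intro n hn
      have := hNe n hn
      rw [div_le_iff₀ (hp1pow n)] at this
      linarith
    -- the auxiliary decreasing sequence d
    set d : ℕ → ℝ := fun n => ε * p 1 ^ n / (p 1 * (1 - p 1)) with hd
    have h1p1 : 0 < 1 - p 1 := by linarith
    have hdpos : ∀ n, 0 < d n := fun n => by
      simp only [hd]; positivity
    have hdrec : ∀ n, p 1 * d (n+1) = p 1 * d n - ε * p 1 ^ n := by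
      intro n
      simp only [hd]
      field_simp
      ring
    have hdhalf : ∀ n, d n ≤ 1/2 := by
      intro n
      simp only [hd, hε]
      rw [div_le_iff₀ (by positivity)]
      have hpow : p 1 ^ n ≤ 1 := pow_le_one₀ (le_of_lt hp1) (le_of_lt hp1')
      nlinarith
    have hdmono : ∀ n ≥ N, d n ≤ d N := by
      intro n hn
      simp only [hd]
      have hden : 0 < p 1 * (1 - p 1) := by positivity
      have hpow : p 1 ^ n ≤ p 1 ^ N :=
        pow_le_pow_of_le_one (le_of_lt hp1) (le_of_lt hp1') hn
      exact (div_le_div_iff_of_pos_right hden).2 (mul_le_mul_of_nonneg_left hpow hεpos.le)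
    have hq1 : ∀ n : ℕ, p 1 ^ n ≤ 1 := fun n =>
      pow_le_one₀ (le_of_lt hp1) (le_of_lt hp1')
    have hB : 0 < ‖fIter N z‖ := norm_pos_iff.mpr (hexz N)
    -- main induction: lower bound on ‖fIter n z‖
    have hmain : ∀ n ≥ N, ‖fIter N z‖ * (1 - d N + d n) * p 1 ^ n
        ≤ ‖fIter n z‖ * p 1 ^ N := by
      intro n hn
      induction n, hn using Nat.le_induction with
      | base => nlinarith [hp1pow N, hB]
      | succ n hn ih =>
        set B := ‖fIter N z‖ with hBdef
        set w := ‖fIter n z‖ with hw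
        set q := p 1 ^ n with hqd
        have f2 : p 1 * w - w ^ 2 ≤ ‖fIter (n+1) z‖ := by
          rw [hfS]
          exact hfge _ (hiterle1 n)
        have f3 : w ≤ ε * q := hsmall n hn
        have f4 : 0 ≤ 1 - d N + d n := by
          have := hdhalf N
          have := (hdpos n).le
          linarith
        have f5 : 1 - d N + d n ≤ 1 := by
          have := hdmono n hn
          linarith
        have f6 : 0 < q := hp1pow n
        have f7 : (0:ℝ) ≤ B := hB.le
        have f8 : (0:ℝ) ≤ w := norm_nonneg _
        have hpw : 0 ≤ p 1 - w := by
          have h1 : ε * q ≤ ε := by nlinarith [hq1 n, hεpos]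
          have h2 : ε ≤ p 1 / 2 := by nlinarith
          linarith
        have step1 : B * (1 - d N + d n) * q * (p 1 - w) ≤ w * p 1 ^ N * (p 1 - w) :=
          mul_le_mul_of_nonneg_right ih hpw
        have step2 : w * p 1 ^ N * (p 1 - w) ≤ ‖fIter (n+1) z‖ * p 1 ^ N := by
          have hpN : (0:ℝ) < p 1 ^ N := hp1pow N
          nlinarith [f2]
        have hAw : (1 - d N + d n) * w ≤ ε * q := by
          nlinarith [mul_nonneg f8 (sub_nonneg.2 f5)]
        have hBq : (0:ℝ) ≤ B * q := mul_nonneg f7 f6.le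
        have hid := hdrec n
        have step3 : B * (1 - d N + d (n+1)) * (q * p 1)
            ≤ B * (1 - d N + d n) * q * (p 1 - w) := by
          nlinarith [mul_le_mul_of_nonneg_left hAw hBq,
            mul_le_mul_of_nonneg_left (le_of_eq hid) hBq,
            mul_le_mul_of_nonneg_left (le_of_eq hid.symm) hBq]
        calc B * (1 - d N + d (n+1)) * p 1 ^ (n+1)
            = B * (1 - d N + d (n+1)) * (q * p 1) := by rw [pow_succ]
          _ ≤ B * (1 - d N + d n) * q * (p 1 - w) := step3
          _ ≤ w * p 1 ^ N * (p 1 - w) := step1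
          _ ≤ ‖fIter (n+1) z‖ * p 1 ^ N := step2
    -- contradiction with hc0
    set δ : ℝ := ‖fIter N z‖ / (2 * p 1 ^ N) with hδ
    have hδpos : 0 < δ := by
      have := hp1pow N
      positivity
    obtain ⟨M, hM⟩ : ∃ M, ∀ n ≥ M, ‖fIter n z‖ / p 1 ^ n < δ :=
      eventually_atTop.mp (hc0.eventually (eventually_lt_nhds hδpos))
    set n := max N M with hn
    have h12 : (1:ℝ)/2 ≤ 1 - d N + d n := by
      have := hdhalf N
      have := (hdpos n).le
      linarith
    have hge := hmain n (le_max_left _ _)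
    have hlow2 : ‖fIter N z‖ * (1/2) * p 1 ^ n ≤ ‖fIter n z‖ * p 1 ^ N := by
      refine le_trans ?_ hge
      exact mul_le_mul_of_nonneg_right (mul_le_mul_of_nonneg_left h12 hB.le)
        (hp1pow n).le
    have hlt := hM n (le_max_right _ _)
    rw [div_lt_iff₀ (hp1pow n)] at hlt
    have hlt2 : ‖fIter n z‖ * p 1 ^ N < δ * p 1 ^ n * p 1 ^ N :=
      mul_lt_mul_of_pos_right hlt (hp1pow N)
    have heq : δ * p 1 ^ N = ‖fIter N z‖ / 2 := by
      have hNe0 : (p 1 ^ N) ≠ 0 := (hp1pow N).ne'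
      simp only [hδ]
      field_simp
    nlinarith [hlt2, hlow2, heq, hp1pow n]
end

section
/- For each r ∈ (0,1), the partial products ∏_{j=1}^{n} B_j(z) converge uniformly on the closed disc D_r as n → ∞ to a function B that is holomorphic on the open disc {|z| < r} and bounded on D_r. -/
open Filter Topology Metric

/-!
Since `p₀ = 0`, the generating function satisfies `|f z| ≤ (p₁ + (1 - p₁) r) |z|` on `|z| ≤ r`,
and `c := p₁ + (1 - p₁) r < 1`, so `|f_n z| ≤ cⁿ r` there. Every factor `B_n - 1` is `q_ν⁻¹` times
a power series with nonnegative coefficients of total mass at most one, evaluated at `f_n z`, so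
`|B_n z - 1| ≤ q_ν⁻¹ cⁿ r`. The Weierstrass test for products then gives uniform convergence on
the compact disc; each `B_n` is holomorphic on the unit disc, hence so is the locally uniform
limit on `|z| < r`, and the continuous limit is bounded on the compact disc.
-/

theorem Summable.of_tsum_ne_zero {ι α : Type*} [AddCommMonoid α] [TopologicalSpace α]
    {f : ι → α} (h : ∑' i, f i ≠ 0) : Summable f :=
  by_contra fun hf => h (tsum_eq_zero_of_not_summable hf)

theorem Finset.prod_Icc_one_eq_prod_range {M : Type*} [CommMonoid M] (u : ℕ → M) (n : ℕ) :
    ∏ j ∈ Finset.Icc 1 n, u j = ∏ j ∈ Finset.range n, u (j + 1) := by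
  rw [Finset.range_eq_Ico, Finset.prod_Ico_add', zero_add, Finset.Ico_add_one_right_eq_Icc]

theorem tendstoUniformlyOn_prod_Icc_one {α R : Type*} [TopologicalSpace α] [NormedCommRing R]
    [NormOneClass R] [CompleteSpace R] {u : ℕ → α → R} {K : Set α} (hK : IsCompact K)
    {ε : ℕ → ℝ} (hε : Summable ε) (hu : ∀ n, ∀ x ∈ K, ‖u n x - 1‖ ≤ ε n)
    (hcont : ∀ n, ContinuousOn (u n) K) :
    TendstoUniformlyOn (fun n x => ∏ j ∈ Finset.Icc 1 n, u j x) (fun x => ∏' j, u (j + 1) x)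
      atTop K := by
  have hprod := ((summable_nat_add_iff 1).2 hε).hasProdUniformlyOn_nat_one_add hK
    (f := fun n x => u (n + 1) x - 1) (.of_forall fun n => hu (n + 1))
    (fun n => (hcont (n + 1)).sub continuousOn_const)
  simp only [add_sub_cancel] at hprod
  simpa only [Finset.prod_Icc_one_eq_prod_range] using hprod.tendstoUniformlyOn_finsetRange

theorem exists_tendstoUniformlyOn_prod_Icc_one_of_differentiableOn {u : ℕ → ℂ → ℂ} {z₀ : ℂ}
    {r R : ℝ} (hrR : r < R) (hu : ∀ n, DifferentiableOn ℂ (u n) (ball z₀ R)) {ε : ℕ → ℝ}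
    (hε : Summable ε) (hbound : ∀ n, ∀ z ∈ closedBall z₀ r, ‖u n z - 1‖ ≤ ε n) :
    ∃ F : ℂ → ℂ,
      TendstoUniformlyOn (fun n z => ∏ j ∈ Finset.Icc 1 n, u j z) F atTop (closedBall z₀ r) ∧
      DifferentiableOn ℂ F (ball z₀ r) ∧ ∃ M, ∀ z ∈ closedBall z₀ r, ‖F z‖ ≤ M := by
  have hprod (n : ℕ) : DifferentiableOn ℂ (fun z => ∏ j ∈ Finset.Icc 1 n, u j z) (ball z₀ R) :=
    .fun_finsetProd fun j _ => hu j
  have hK := isCompact_closedBall z₀ r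
  have hconv := tendstoUniformlyOn_prod_Icc_one hK hε hbound
    fun n => (hu n).continuousOn.mono (closedBall_subset_ball hrR)
  refine ⟨_, hconv, ?_, hK.exists_bound_of_continuousOn (hconv.continuousOn
    (.of_forall fun n => (hprod n).continuousOn.mono (closedBall_subset_ball hrR)))⟩
  exact (hconv.mono ball_subset_closedBall).tendstoLocallyUniformlyOn.differentiableOn
    (.of_forall fun n => (hprod n).mono (ball_subset_ball hrR.le)) isOpen_ball

theorem norm_iterate_le_pow_mul {E : Type*} [SeminormedAddGroup E] {g : E → E} {r c : ℝ}
    (hc0 : 0 ≤ c) (hc1 : c ≤ 1) (hg : ∀ z, ‖z‖ ≤ r → ‖g z‖ ≤ c * ‖z‖) (n : ℕ) {z : E}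
    (hz : ‖z‖ ≤ r) : ‖g^[n] z‖ ≤ c ^ n * ‖z‖ := by
  induction n generalizing z with
  | zero => simp
  | succ n ih =>
    have hgz := hg z hz
    have hgz_le : ‖g z‖ ≤ r := hgz.trans ((mul_le_of_le_one_left (norm_nonneg z) hc1).trans hz)
    calc ‖g^[n + 1] z‖ = ‖g^[n] (g z)‖ := by rw [Function.iterate_succ_apply]
      _ ≤ c ^ n * ‖g z‖ := ih hgz_le
      _ ≤ c ^ n * (c * ‖z‖) := by gcongr
      _ = c ^ (n + 1) * ‖z‖ := by ring

theorem norm_ofReal_mul_pow {a : ℝ} (ha : 0 ≤ a) (z : ℂ) (k : ℕ) :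
    ‖(a : ℂ) * z ^ k‖ = a * ‖z‖ ^ k := by
  rw [norm_mul, norm_pow, Complex.norm_real, Real.norm_of_nonneg ha]

section GeneratingFunction

variable {p : ℕ → ℝ}

theorem norm_tsum_ofReal_mul_pow_le (hp0 : p 0 = 0) (hpnn : ∀ n, 0 ≤ p n)
    (hpsum : ∑' n, p n = 1) {r : ℝ} (hr : r ≤ 1) {z : ℂ} (hz : ‖z‖ ≤ r) :
    ‖∑' n, (p n : ℂ) * z ^ n‖ ≤ (p 1 + (1 - p 1) * r) * ‖z‖ := by
  have hp : Summable p := .of_tsum_ne_zero (by simp [hpsum])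
  -- the linear term is kept exact, every higher term `pₙ |z|ⁿ` is bounded by `pₙ r |z|`
  set g : ℕ → ℝ := fun n => p n * (r * ‖z‖) + if n = 1 then p 1 * (‖z‖ - r * ‖z‖) else 0
  have hg : HasSum g (r * ‖z‖ + p 1 * (‖z‖ - r * ‖z‖)) := by
    simpa [hpsum] using (hp.hasSum.mul_right (r * ‖z‖)).add (hasSum_ite_eq 1 _)
  have hterm : ∀ n, ‖(p n : ℂ) * z ^ n‖ ≤ g n := by
    intro n
    rw [norm_ofReal_mul_pow (hpnn n)]
    match n with
    | 0 => simp [g, hp0]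
    | 1 => exact le_of_eq (by simp only [g, pow_one, ↓reduceIte]; ring)
    | n + 2 =>
      simp only [g, if_neg (by omega : n + 2 ≠ 1), add_zero]
      refine mul_le_mul_of_nonneg_left ?_ (hpnn _)
      calc ‖z‖ ^ (n + 2) ≤ ‖z‖ ^ 2 :=
            pow_le_pow_of_le_one (norm_nonneg z) (hz.trans hr) (by omega)
        _ ≤ r * ‖z‖ := by rw [sq]; exact mul_le_mul_of_nonneg_right hz (norm_nonneg z)
  calc ‖∑' n, (p n : ℂ) * z ^ n‖
      ≤ r * ‖z‖ + p 1 * (‖z‖ - r * ‖z‖) := tsum_of_norm_bounded hg hterm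
    _ = (p 1 + (1 - p 1) * r) * ‖z‖ := by ring

theorem differentiableOn_tsum_ofReal_mul_pow (hpnn : ∀ n, 0 ≤ p n) (hp : Summable p) :
    DifferentiableOn ℂ (fun z : ℂ => ∑' n, (p n : ℂ) * z ^ n) (ball 0 1) := by
  refine Complex.differentiableOn_tsum_of_summable_norm hp (fun n => by fun_prop) isOpen_ball
    fun n w hw => ?_
  rw [norm_ofReal_mul_pow (hpnn n)]
  exact mul_le_of_le_one_right (hpnn n)
    (pow_le_one₀ (norm_nonneg w) (mem_ball_zero_iff.1 hw).le)

variable {f : ℂ → ℂ}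

theorem mapsTo_ball_of_eq_tsum (hp0 : p 0 = 0) (hpnn : ∀ n, 0 ≤ p n) (hpsum : ∑' n, p n = 1)
    (hf : ∀ z : ℂ, ‖z‖ ≤ 1 → f z = ∑' n, (p n : ℂ) * z ^ n) :
    Set.MapsTo f (ball 0 1) (ball 0 1) := fun z hz => by
  rw [mem_ball_zero_iff] at hz ⊢
  have hfz := hf z hz.le ▸ norm_tsum_ofReal_mul_pow_le hp0 hpnn hpsum le_rfl hz.le
  rw [mul_one, add_sub_cancel, one_mul] at hfz
  exact hfz.trans_lt hz

theorem differentiableOn_ball_of_eq_tsum (hpnn : ∀ n, 0 ≤ p n) (hp : Summable p)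
    (hf : ∀ z : ℂ, ‖z‖ ≤ 1 → f z = ∑' n, (p n : ℂ) * z ^ n) :
    DifferentiableOn ℂ f (ball 0 1) :=
  (differentiableOn_tsum_ofReal_mul_pow hpnn hp).congr
    fun z hz => hf z (mem_ball_zero_iff.1 hz).le

end GeneratingFunction

noncomputable def tailSeries (q : ℕ → ℝ) (ν : ℕ) (w : ℂ) : ℂ :=
  ∑' l : ℕ, if ν < l then (q l : ℂ) * w ^ (l - ν) else 0

section TailSeries

variable {q : ℕ → ℝ} {ν : ℕ}

theorem norm_tailSeries_term_le (hqnn : ∀ l, 0 ≤ q l) {w : ℂ} (hw : ‖w‖ ≤ 1) (l : ℕ) :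
    ‖if ν < l then (q l : ℂ) * w ^ (l - ν) else 0‖ ≤ q l * ‖w‖ := by
  split_ifs with h
  · rw [norm_ofReal_mul_pow (hqnn l)]
    exact mul_le_mul_of_nonneg_left
      ((pow_le_pow_of_le_one (norm_nonneg w) hw (by omega)).trans_eq (pow_one _)) (hqnn l)
  · rw [norm_zero]
    exact mul_nonneg (hqnn l) (norm_nonneg w)

theorem norm_tailSeries_le (hqnn : ∀ l, 0 ≤ q l) (hqsum : ∑' l, q l = 1) {w : ℂ}
    (hw : ‖w‖ ≤ 1) : ‖tailSeries q ν w‖ ≤ ‖w‖ := by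
  have hq : Summable q := .of_tsum_ne_zero (by simp [hqsum])
  simpa [tailSeries, hqsum] using
    tsum_of_norm_bounded (hq.hasSum.mul_right ‖w‖) (norm_tailSeries_term_le hqnn hw)

theorem differentiableOn_tailSeries (hqnn : ∀ l, 0 ≤ q l) (hq : Summable q) :
    DifferentiableOn ℂ (tailSeries q ν) (ball 0 1) := by
  refine Complex.differentiableOn_tsum_of_summable_norm hq (fun l => by split_ifs <;> fun_prop)
    isOpen_ball fun l w hw => ?_
  have hw1 : ‖w‖ ≤ 1 := (mem_ball_zero_iff.1 hw).le
  exact (norm_tailSeries_term_le hqnn hw1 l).trans (mul_le_of_le_one_right (hqnn l) hw1)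

end TailSeries

theorem stmt_6_general
    (p : ℕ → ℝ) (hp0 : p 0 = 0) (hp1' : p 1 < 1)
    (hpnn : ∀ k, 0 ≤ p k) (hpsum : ∑' k, p k = 1)
    (f : ℂ → ℂ) (hf : ∀ z : ℂ, ‖z‖ ≤ 1 → f z = ∑' n, (p n : ℂ) * z ^ n)
    (fIter : ℕ → ℂ → ℂ) (hf0 : ∀ z, fIter 0 z = z)
    (hfS : ∀ n z, fIter (n + 1) z = f (fIter n z))
    (q : ℕ → ℝ) (hqnn : ∀ k, 0 ≤ q k) (hqsum : ∑' k, q k = 1)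
    (ν : ℕ)
    (B : ℕ → ℂ → ℂ)
    (hB : ∀ n z, B n z =
      1 + (q ν : ℂ)⁻¹ * ∑' l : ℕ, if ν < l then (q l : ℂ) * fIter n z ^ (l - ν) else 0)
    (r : ℝ) (hr0 : 0 < r) (hr1 : r < 1) :
    ∃ Blim : ℂ → ℂ,
      TendstoUniformlyOn (fun n z => ∏ j ∈ Finset.Icc 1 n, B j z) Blim atTop
        {z : ℂ | ‖z‖ ≤ r} ∧
      DifferentiableOn ℂ Blim {z : ℂ | ‖z‖ < r} ∧
      ∃ M : ℝ, ∀ z : ℂ, ‖z‖ ≤ r → ‖Blim z‖ ≤ M := by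
  obtain rfl : fIter = fun n => f^[n] := funext fun n => funext fun z => by
    induction n with
    | zero => exact hf0 z
    | succ n ih => rw [hfS, ih, Function.iterate_succ_apply']
  obtain rfl : B = fun n z => 1 + (q ν : ℂ)⁻¹ * tailSeries q ν (f^[n] z) := funext₂ hB
  set c := p 1 + (1 - p 1) * r
  have hc0 : 0 ≤ c := by nlinarith [hpnn 1]
  have hc1 : c < 1 := by nlinarith
  have hf_maps := mapsTo_ball_of_eq_tsum hp0 hpnn hpsum hf
  have hf_diff := differentiableOn_ball_of_eq_tsum hpnn (.of_tsum_ne_zero (by simp [hpsum])) hf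
  have hB_diff (n : ℕ) :
      DifferentiableOn ℂ (fun z => 1 + (q ν : ℂ)⁻¹ * tailSeries q ν (f^[n] z)) (ball 0 1) :=
    (differentiableOn_const _).add <| (differentiableOn_const _).mul <|
      (differentiableOn_tailSeries hqnn (.of_tsum_ne_zero (by simp [hqsum]))).comp
        (hf_diff.iterate hf_maps n) (hf_maps.iterate n)
  have hB_le (n : ℕ) (z : ℂ) (hz : z ∈ closedBall 0 r) :
      ‖1 + (q ν : ℂ)⁻¹ * tailSeries q ν (f^[n] z) - 1‖ ≤ (q ν)⁻¹ * (c ^ n * r) := by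
    rw [mem_closedBall_zero_iff] at hz
    have hfn : ‖f^[n] z‖ ≤ c ^ n * r := (norm_iterate_le_pow_mul hc0 hc1.le
      (fun w hw => hf w (hw.trans hr1.le) ▸ norm_tsum_ofReal_mul_pow_le hp0 hpnn hpsum hr1.le hw)
      n hz).trans (by gcongr)
    have hfn1 : ‖f^[n] z‖ ≤ 1 := hfn.trans (mul_le_one₀ (pow_le_one₀ hc0 hc1.le) hr0.le hr1.le)
    rw [add_sub_cancel_left, norm_mul, norm_inv, Complex.norm_real, Real.norm_of_nonneg (hqnn ν)]
    exact mul_le_mul_of_nonneg_left ((norm_tailSeries_le hqnn hqsum hfn1).trans hfn)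
      (inv_nonneg.2 (hqnn ν))
  obtain ⟨F, hconv, hdiff, M, hM⟩ :=
    exists_tendstoUniformlyOn_prod_Icc_one_of_differentiableOn hr1 hB_diff
      (((summable_geometric_of_lt_one hc0 hc1).mul_right r).mul_left _) hB_le
  refine ⟨F, ?_, by rwa [← ball_zero_eq], M, fun z hz => hM z (mem_closedBall_zero_iff.2 hz)⟩
  convert hconv using 1
  exact Set.ext fun z => mem_closedBall_zero_iff.symm

/-- For each `r ∈ (0,1)`, the partial products `∏_{j=1}^{n} B_j(z)` converge
uniformly on the closed disc `D_r` to a function `B` that is holomorphic on `{|z| < r}`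
and bounded on `D_r`. -/
theorem stmt_6
    (p : ℕ → ℝ) (hp0 : p 0 = 0) (hp1 : 0 < p 1) (hp1' : p 1 < 1)
    (hpnn : ∀ k, 0 ≤ p k) (hpsum : ∑' k, p k = 1)
    (hmean : Summable fun k : ℕ => (k : ℝ) * p k)
    (a : ℝ) (ha : a = ∑' k : ℕ, (k : ℝ) * p k) (ha1 : 1 < a)
    (f : ℂ → ℂ) (hf : ∀ z : ℂ, ‖z‖ ≤ 1 → f z = ∑' n, (p n : ℂ) * z ^ n)
    (fIter : ℕ → ℂ → ℂ) (hf0 : ∀ z, fIter 0 z = z)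
    (hfS : ∀ n z, fIter (n + 1) z = f (fIter n z))
    (q : ℕ → ℝ) (hq0 : q 0 = 0) (hqnn : ∀ k, 0 ≤ q k) (hqsum : ∑' k, q k = 1)
    (ν : ℕ) (hν : 0 < q ν) (hνmin : ∀ i, 0 < q i → ν ≤ i)
    (B : ℕ → ℂ → ℂ)
    (hB : ∀ n z, B n z =
      1 + (q ν : ℂ)⁻¹ * ∑' l : ℕ, if ν < l then (q l : ℂ) * fIter n z ^ (l - ν) else 0)
    (r : ℝ) (hr0 : 0 < r) (hr1 : r < 1) :
    ∃ Blim : ℂ → ℂ,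
      TendstoUniformlyOn (fun n z => ∏ j ∈ Finset.Icc 1 n, B j z) Blim atTop
        {z : ℂ | ‖z‖ ≤ r} ∧
      DifferentiableOn ℂ Blim {z : ℂ | ‖z‖ < r} ∧
      ∃ M : ℝ, ∀ z : ℂ, ‖z‖ ≤ r → ‖Blim z‖ ≤ M :=
  stmt_6_general p hp0 hp1' hpnn hpsum f hf fIter hf0 hfS q hqnn hqsum ν B hB r hr0 hr1
end

section
/- Let r ∈ (0,1). There is a constant c > 0 such that for all s ∈ (0, r], all integers N ≥ 1, and all z with |z| ≤ s: |∏_{n=1}^{N} h(f_n(z))| ≤ c (|z|/s) q_ν^{N} p_1^{−νN(N+1)/2} f_{N+1}(s)^{νN}. -/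
/-!
Write `F`, `H` for the generating functions of `p`, `q` on `[0, 1]`, so that `‖f w‖ ≤ F ‖w‖` and
`‖h w‖ ≤ H ‖w‖`. Since `p₀ = q₀ = 0`, both are subhomogeneous, `F (t y) ≤ t F y` for `t ∈ [0, 1]`;
with `t = |z| / s` each factor is at most `t H (Fⁿ s)`, and as `N ≥ 1` the product is at most
`t ∏ H (Fⁿ s)`.

Isolating the lowest coefficient gives `H y ≤ yᵛ (q_ν + y) ≤ q_ν e^{y / q_ν} yᵛ`, and
`F x ≤ (p₁ + (1 - p₁) r) x` on `[0, r]`, so `Fⁿ s` decays geometrically and the exponential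
factors have a bounded product. Finally `F ≥ p₁ · id` gives `p₁^{N+1-n} Fⁿ s ≤ F^{N+1} s`, and
multiplying these over `n = 1, …, N` produces the factor `p₁^{-N(N+1)/2}`.
-/

open Set Real

noncomputable def pgf (p : ℕ → ℝ) (x : ℝ) : ℝ := ∑' n, p n * x ^ n

section Pgf

variable {p : ℕ → ℝ}

theorem summable_mul_pow_of_nonneg (hp : ∀ n, 0 ≤ p n) (hps : Summable p) {x : ℝ}
    (hx0 : 0 ≤ x) (hx1 : x ≤ 1) : Summable fun n => p n * x ^ n :=
  hps.of_nonneg_of_le (fun n => mul_nonneg (hp n) (pow_nonneg hx0 n))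
    fun n => mul_le_of_le_one_right (hp n) (pow_le_one₀ hx0 hx1)

theorem summable_of_tsum_eq_one (hsum : ∑' n, p n = 1) : Summable p := by
  by_contra h
  simp [tsum_eq_zero_of_not_summable h] at hsum

theorem pgf_nonneg (hp : ∀ n, 0 ≤ p n) {x : ℝ} (hx : 0 ≤ x) : 0 ≤ pgf p x :=
  tsum_nonneg fun n => mul_nonneg (hp n) (pow_nonneg hx n)

theorem pgf_monotoneOn (hp : ∀ n, 0 ≤ p n) (hps : Summable p) : MonotoneOn (pgf p) (Icc 0 1) :=
  fun _ hx _ hy hxy => Summable.tsum_le_tsum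
    (fun n => mul_le_mul_of_nonneg_left (pow_le_pow_left₀ hx.1 hxy n) (hp n))
    (summable_mul_pow_of_nonneg hp hps hx.1 hx.2) (summable_mul_pow_of_nonneg hp hps hy.1 hy.2)

theorem mul_pow_le_pgf (hp : ∀ n, 0 ≤ p n) (hps : Summable p) {x : ℝ} (hx0 : 0 ≤ x)
    (hx1 : x ≤ 1) (k : ℕ) : p k * x ^ k ≤ pgf p x :=
  (summable_mul_pow_of_nonneg hp hps hx0 hx1).le_tsum k
    fun n _ => mul_nonneg (hp n) (pow_nonneg hx0 n)

theorem pgf_le_mul_pow_add_mul_pow_succ (hp : ∀ n, 0 ≤ p n) (hsum : ∑' n, p n = 1) {k : ℕ}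
    (hk : ∀ i < k, p i = 0) {x : ℝ} (hx0 : 0 ≤ x) (hx1 : x ≤ 1) :
    pgf p x ≤ p k * x ^ k + (1 - p k) * x ^ (k + 1) := by
  have hps := summable_of_tsum_eq_one hsum
  have hite := hasSum_ite_eq k (p k * (x ^ k - x ^ (k + 1)))
  have hterm : ∀ n, p n * x ^ n ≤
      p n * x ^ (k + 1) + if n = k then p k * (x ^ k - x ^ (k + 1)) else 0 := by
    intro n
    rcases lt_trichotomy n k with hn | rfl | hn
    · simp [hk n hn, hn.ne]
    · rw [if_pos rfl]
      exact le_of_eq (by ring)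
    · rw [if_neg hn.ne', add_zero]
      exact mul_le_mul_of_nonneg_left (pow_le_pow_of_le_one hx0 hx1 hn) (hp n)
  calc pgf p x
      ≤ ∑' n, (p n * x ^ (k + 1) + if n = k then p k * (x ^ k - x ^ (k + 1)) else 0) :=
        Summable.tsum_le_tsum hterm (summable_mul_pow_of_nonneg hp hps hx0 hx1)
          ((hps.mul_right _).add hite.summable)
    _ = p k * x ^ k + (1 - p k) * x ^ (k + 1) := by
        rw [(hps.mul_right _).tsum_add hite.summable, tsum_mul_right, hsum, hite.tsum_eq]
        ring

theorem pgf_le_mul_exp_mul_pow (hp : ∀ n, 0 ≤ p n) (hsum : ∑' n, p n = 1) {ν : ℕ}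
    (hν : 0 < p ν) (hνmin : ∀ i < ν, p i = 0) {y : ℝ} (hy0 : 0 ≤ y) (hy1 : y ≤ 1) :
    pgf p y ≤ p ν * exp (y / p ν) * y ^ ν := by
  have hexp : p ν + y ≤ p ν * exp (y / p ν) := by
    have := mul_le_mul_of_nonneg_left (add_one_le_exp (y / p ν)) hν.le
    rwa [mul_add, mul_div_cancel₀ _ hν.ne', mul_one, add_comm] at this
  calc pgf p y ≤ p ν * y ^ ν + (1 - p ν) * y ^ (ν + 1) :=
        pgf_le_mul_pow_add_mul_pow_succ hp hsum hνmin hy0 hy1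
    _ ≤ (p ν + y) * y ^ ν := by
        rw [pow_succ]
        nlinarith [mul_nonneg hν.le (mul_nonneg (pow_nonneg hy0 ν) hy0)]
    _ ≤ p ν * exp (y / p ν) * y ^ ν := mul_le_mul_of_nonneg_right hexp (pow_nonneg hy0 ν)

theorem norm_le_pgf (hp : ∀ n, 0 ≤ p n) (hps : Summable p) {f : ℂ → ℂ}
    (hf : ∀ z : ℂ, ‖z‖ ≤ 1 → f z = ∑' n, (p n : ℂ) * z ^ n) {z : ℂ} (hz : ‖z‖ ≤ 1) :
    ‖f z‖ ≤ pgf p ‖z‖ := by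
  have hnorm : ∀ n, ‖(p n : ℂ) * z ^ n‖ = p n * ‖z‖ ^ n := fun n => by
    rw [norm_mul, norm_pow, Complex.norm_real, Real.norm_of_nonneg (hp n)]
  rw [hf z hz, pgf, ← tsum_congr hnorm]
  refine norm_tsum_le_tsum_norm ?_
  simpa only [hnorm] using summable_mul_pow_of_nonneg hp hps (norm_nonneg z) hz

theorem apply_ofReal_eq_pgf {f : ℂ → ℂ} (hf : ∀ z : ℂ, ‖z‖ ≤ 1 → f z = ∑' n, (p n : ℂ) * z ^ n)
    {x : ℝ} (hx : x ∈ Icc (0 : ℝ) 1) : f x = pgf p x := by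
  rw [hf _ (by simpa [abs_of_nonneg hx.1] using hx.2), pgf, Complex.ofReal_tsum]
  push_cast
  rfl

end Pgf

structure IsProbOnPos (p : ℕ → ℝ) : Prop where
  nonneg : ∀ n, 0 ≤ p n
  apply_zero : p 0 = 0
  tsum_eq_one : ∑' n, p n = 1

namespace IsProbOnPos

variable {p : ℕ → ℝ}

theorem summable (hp : IsProbOnPos p) : Summable p := summable_of_tsum_eq_one hp.tsum_eq_one

theorem le_one (hp : IsProbOnPos p) (k : ℕ) : p k ≤ 1 :=
  hp.tsum_eq_one ▸ hp.summable.le_tsum k fun n _ => hp.nonneg n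

theorem pgf_mul_le (hp : IsProbOnPos p) {t y : ℝ} (ht : t ∈ Icc (0 : ℝ) 1)
    (hy : y ∈ Icc (0 : ℝ) 1) : pgf p (t * y) ≤ t * pgf p y := by
  rw [pgf, pgf, ← tsum_mul_left]
  refine Summable.tsum_le_tsum (fun n => ?_)
    (summable_mul_pow_of_nonneg hp.nonneg hp.summable (mul_nonneg ht.1 hy.1)
      (mul_le_one₀ ht.2 hy.1 hy.2))
    ((summable_mul_pow_of_nonneg hp.nonneg hp.summable hy.1 hy.2).mul_left t)
  rcases Nat.eq_zero_or_pos n with rfl | hn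
  · simp [hp.apply_zero]
  · calc p n * (t * y) ^ n = p n * y ^ n * t ^ n := by ring
      _ ≤ p n * y ^ n * t :=
        mul_le_mul_of_nonneg_left (pow_le_of_le_one ht.1 ht.2 hn.ne')
          (mul_nonneg (hp.nonneg n) (pow_nonneg hy.1 n))
      _ = t * (p n * y ^ n) := by ring

theorem pgf_le_self (hp : IsProbOnPos p) {x : ℝ} (hx : x ∈ Icc (0 : ℝ) 1) : pgf p x ≤ x := by
  have hone : pgf p 1 = 1 := by simp [pgf, hp.tsum_eq_one]
  simpa [hone] using hp.pgf_mul_le hx ⟨zero_le_one, le_rfl⟩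

theorem mapsTo_pgf (hp : IsProbOnPos p) {r : ℝ} (hr : r ≤ 1) :
    MapsTo (pgf p) (Icc 0 r) (Icc 0 r) :=
  fun _ hx => ⟨pgf_nonneg hp.nonneg hx.1, (hp.pgf_le_self ⟨hx.1, hx.2.trans hr⟩).trans hx.2⟩

theorem pgf_le_mul_self (hp : IsProbOnPos p) {r x : ℝ} (hr : r ≤ 1) (hx : x ∈ Icc 0 r) :
    pgf p x ≤ (p 1 + (1 - p 1) * r) * x := by
  have hsplit := pgf_le_mul_pow_add_mul_pow_succ hp.nonneg hp.tsum_eq_one (k := 1)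
    (fun i hi => by rw [Nat.lt_one_iff.1 hi, hp.apply_zero]) hx.1 (hx.2.trans hr)
  have htail : (1 - p 1) * x ^ 2 ≤ (1 - p 1) * (r * x) :=
    mul_le_mul_of_nonneg_left (by rw [sq]; exact mul_le_mul_of_nonneg_right hx.2 hx.1)
      (sub_nonneg.2 (hp.le_one 1))
  norm_num at hsplit
  linarith

end IsProbOnPos

section Iterate

theorem iterate_apply_eq_of_semiconj_on {α β : Type*} {f : β → β} {F : α → α} {e : α → β}
    {s : Set α} (hmaps : MapsTo F s s) (h : ∀ x ∈ s, f (e x) = e (F x)) (n : ℕ) {x : α}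
    (hx : x ∈ s) : f^[n] (e x) = e (F^[n] x) := by
  induction n with
  | zero => rfl
  | succ n ih =>
    rw [Function.iterate_succ_apply', Function.iterate_succ_apply', ih, h _ (hmaps.iterate n hx)]

variable {F : ℝ → ℝ}

theorem iterate_le_pow_mul {s : Set ℝ} {ρ : ℝ} (hmaps : MapsTo F s s) (hρ : 0 ≤ ρ)
    (h : ∀ x ∈ s, F x ≤ ρ * x) (n : ℕ) {x : ℝ} (hx : x ∈ s) : F^[n] x ≤ ρ ^ n * x := by
  induction n with
  | zero => simp
  | succ n ih =>
    rw [Function.iterate_succ_apply', pow_succ', mul_assoc]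
    exact (h _ (hmaps.iterate n hx)).trans (mul_le_mul_of_nonneg_left ih hρ)

theorem iterate_mul_le_mul_iterate (hmono : MonotoneOn F (Icc 0 1))
    (hmaps : MapsTo F (Icc 0 1) (Icc 0 1))
    (h : ∀ t ∈ Icc (0 : ℝ) 1, ∀ y ∈ Icc (0 : ℝ) 1, F (t * y) ≤ t * F y) {t y : ℝ}
    (ht : t ∈ Icc (0 : ℝ) 1) (hy : y ∈ Icc (0 : ℝ) 1) (n : ℕ) : F^[n] (t * y) ≤ t * F^[n] y := by
  induction n with
  | zero => rfl
  | succ n ih =>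
    rw [Function.iterate_succ_apply', Function.iterate_succ_apply']
    have hFy := hmaps.iterate n hy
    exact (hmono (hmaps.iterate n (unitInterval.mul_mem ht hy)) (unitInterval.mul_mem ht hFy)
      ih).trans (h t ht _ hFy)

theorem norm_iterate_le {E : Type*} [SeminormedAddGroup E] {f : E → E}
    (hmono : MonotoneOn F (Icc 0 1)) (hmaps : MapsTo F (Icc 0 1) (Icc 0 1))
    (hf : ∀ w : E, ‖w‖ ≤ 1 → ‖f w‖ ≤ F ‖w‖) (n : ℕ) {w : E} (hw : ‖w‖ ≤ 1) :
    ‖f^[n] w‖ ≤ F^[n] ‖w‖ := by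
  induction n with
  | zero => rfl
  | succ n ih =>
    rw [Function.iterate_succ_apply', Function.iterate_succ_apply']
    have hFn := hmaps.iterate n ⟨norm_nonneg w, hw⟩
    have hn : ‖f^[n] w‖ ∈ Icc (0 : ℝ) 1 := ⟨norm_nonneg _, ih.trans hFn.2⟩
    exact (hf _ hn.2).trans (hmono hn hFn ih)

end Iterate

theorem pow_choose_two_mul_prod_le {u : ℕ → ℝ} {c : ℝ} (hc : 0 ≤ c) (hu : ∀ n, 0 ≤ u n)
    (h : ∀ n, c * u n ≤ u (n + 1)) (N : ℕ) :
    c ^ (N + 1).choose 2 * ∏ n ∈ Finset.Icc 1 N, u n ≤ u (N + 1) ^ N := by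
  induction N with
  | zero => simp
  | succ N ih =>
    rw [Finset.prod_Icc_succ_top (by omega), Nat.choose_succ_succ', Nat.choose_one_right, pow_add]
    calc c ^ (N + 1) * c ^ (N + 1).choose 2 * ((∏ n ∈ Finset.Icc 1 N, u n) * u (N + 1))
        = (c ^ (N + 1).choose 2 * ∏ n ∈ Finset.Icc 1 N, u n) * (c ^ (N + 1) * u (N + 1)) := by
          ring
      _ ≤ u (N + 1) ^ N * (c ^ (N + 1) * u (N + 1)) :=
          mul_le_mul_of_nonneg_right ih (mul_nonneg (pow_nonneg hc _) (hu _))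
      _ = (c * u (N + 1)) ^ (N + 1) := by ring
      _ ≤ u (N + 1 + 1) ^ (N + 1) := pow_le_pow_left₀ (mul_nonneg hc (hu _)) (h _) _

theorem norm_prod_iterate_le {p q : ℕ → ℝ} (hp : IsProbOnPos p) (hq : IsProbOnPos q)
    {f h : ℂ → ℂ} (hf : ∀ z : ℂ, ‖z‖ ≤ 1 → f z = ∑' n, (p n : ℂ) * z ^ n)
    (hh : ∀ z : ℂ, ‖z‖ ≤ 1 → h z = ∑' n, (q n : ℂ) * z ^ n) {s : ℝ} (hs0 : 0 < s)
    (hs1 : s ≤ 1) {N : ℕ} (hN : N ≠ 0) {z : ℂ} (hz : ‖z‖ ≤ s) :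
    ‖∏ n ∈ Finset.Icc 1 N, h (f^[n] z)‖ ≤
      ‖z‖ / s * ∏ n ∈ Finset.Icc 1 N, pgf q ((pgf p)^[n] s) := by
  set t := ‖z‖ / s
  have ht : t ∈ Icc (0 : ℝ) 1 := ⟨by positivity, div_le_one_of_le₀ hz hs0.le⟩
  have hs : s ∈ Icc (0 : ℝ) 1 := ⟨hs0.le, hs1⟩
  have hmaps := hp.mapsTo_pgf le_rfl
  have hmono := pgf_monotoneOn hp.nonneg hp.summable
  have hfactor : ∀ n, ‖h (f^[n] z)‖ ≤ t * pgf q ((pgf p)^[n] s) := by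
    intro n
    have hFs := hmaps.iterate n hs
    have htFs : t * (pgf p)^[n] s ∈ Icc (0 : ℝ) 1 := unitInterval.mul_mem ht hFs
    have hnorm : ‖f^[n] z‖ ≤ t * (pgf p)^[n] s :=
      calc ‖f^[n] z‖ ≤ (pgf p)^[n] ‖z‖ :=
            norm_iterate_le hmono hmaps (fun _ hw => norm_le_pgf hp.nonneg hp.summable hf hw) n
              (hz.trans hs1)
        _ = (pgf p)^[n] (t * s) := by rw [div_mul_cancel₀ _ hs0.ne']
        _ ≤ t * (pgf p)^[n] s :=
            iterate_mul_le_mul_iterate hmono hmaps (fun _ ht _ hy => hp.pgf_mul_le ht hy) ht hs n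
    calc ‖h (f^[n] z)‖ ≤ pgf q ‖f^[n] z‖ :=
          norm_le_pgf hq.nonneg hq.summable hh (hnorm.trans htFs.2)
      _ ≤ pgf q (t * (pgf p)^[n] s) :=
          pgf_monotoneOn hq.nonneg hq.summable ⟨norm_nonneg _, hnorm.trans htFs.2⟩ htFs hnorm
      _ ≤ t * pgf q ((pgf p)^[n] s) := hq.pgf_mul_le ht hFs
  calc ‖∏ n ∈ Finset.Icc 1 N, h (f^[n] z)‖
      = ∏ n ∈ Finset.Icc 1 N, ‖h (f^[n] z)‖ := norm_prod _ _
    _ ≤ ∏ n ∈ Finset.Icc 1 N, t * pgf q ((pgf p)^[n] s) :=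
        Finset.prod_le_prod (fun _ _ => norm_nonneg _) fun n _ => hfactor n
    _ = t ^ N * ∏ n ∈ Finset.Icc 1 N, pgf q ((pgf p)^[n] s) := by
        rw [Finset.prod_mul_distrib, Finset.prod_const, Nat.card_Icc, Nat.add_sub_cancel]
    _ ≤ t * ∏ n ∈ Finset.Icc 1 N, pgf q ((pgf p)^[n] s) :=
        mul_le_mul_of_nonneg_right (pow_le_of_le_one ht.1 ht.2 hN)
          (Finset.prod_nonneg fun n _ => pgf_nonneg hq.nonneg (hmaps.iterate n hs).1)

theorem prod_iterate_pgf_le_inv_pow_mul_pow {p : ℕ → ℝ} (hp : IsProbOnPos p) (hp1 : 0 < p 1)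
    {s : ℝ} (hs : s ∈ Icc (0 : ℝ) 1) (N : ℕ) :
    ∏ n ∈ Finset.Icc 1 N, (pgf p)^[n] s ≤ (p 1 ^ (N + 1).choose 2)⁻¹ * (pgf p)^[N + 1] s ^ N := by
  have hFs : ∀ n, (pgf p)^[n] s ∈ Icc (0 : ℝ) 1 := fun n => (hp.mapsTo_pgf le_rfl).iterate n hs
  rw [le_inv_mul_iff₀ (by positivity)]
  refine pow_choose_two_mul_prod_le hp1.le (fun n => (hFs n).1) (fun n => ?_) N
  rw [Function.iterate_succ_apply']
  simpa using mul_pow_le_pgf hp.nonneg hp.summable (hFs n).1 (hFs n).2 1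

theorem prod_pgf_comp_iterate_pgf_le {p q : ℕ → ℝ} (hp : IsProbOnPos p) (hp1 : 0 < p 1)
    (hq : ∀ n, 0 ≤ q n) (hqsum : ∑' n, q n = 1) {ν : ℕ} (hν : 0 < q ν)
    (hνmin : ∀ i < ν, q i = 0) {ρ r s : ℝ} (hρ0 : 0 ≤ ρ) (hρ1 : ρ < 1) (hr1 : r ≤ 1)
    (hρ : ∀ x ∈ Icc 0 r, pgf p x ≤ ρ * x) (hs : s ∈ Icc 0 r) (N : ℕ) :
    ∏ n ∈ Finset.Icc 1 N, pgf q ((pgf p)^[n] s) ≤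
      exp ((1 - ρ)⁻¹ / q ν) * q ν ^ N *
        ((p 1 ^ (N + 1).choose 2)⁻¹ * (pgf p)^[N + 1] s ^ N) ^ ν := by
  set F := pgf p
  have hs1 : s ∈ Icc (0 : ℝ) 1 := ⟨hs.1, hs.2.trans hr1⟩
  have hFs : ∀ n, F^[n] s ∈ Icc (0 : ℝ) 1 := fun n => (hp.mapsTo_pgf le_rfl).iterate n hs1
  have hFρ : ∀ n, F^[n] s ≤ ρ ^ n := fun n =>
    (iterate_le_pow_mul (hp.mapsTo_pgf hr1) hρ0 hρ n hs).trans
      (mul_le_of_le_one_right (pow_nonneg hρ0 n) hs1.2)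
  have hgeom : ∑ n ∈ Finset.Icc 1 N, ρ ^ n ≤ (1 - ρ)⁻¹ :=
    (summable_geometric_of_lt_one hρ0 hρ1).sum_le_tsum _ (fun n _ => pow_nonneg hρ0 n) |>.trans
      (tsum_geometric_of_lt_one hρ0 hρ1).le
  have hprod0 : 0 ≤ ∏ n ∈ Finset.Icc 1 N, F^[n] s := Finset.prod_nonneg fun n _ => (hFs n).1
  calc ∏ n ∈ Finset.Icc 1 N, pgf q (F^[n] s)
      ≤ ∏ n ∈ Finset.Icc 1 N, (q ν * exp (ρ ^ n / q ν) * F^[n] s ^ ν) := by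
        refine Finset.prod_le_prod (fun n _ => pgf_nonneg hq (hFs n).1) fun n _ => ?_
        exact (pgf_le_mul_exp_mul_pow hq hqsum hν hνmin (hFs n).1 (hFs n).2).trans
          (mul_le_mul_of_nonneg_right (by gcongr; exact hFρ n) (pow_nonneg (hFs n).1 ν))
    _ = exp ((∑ n ∈ Finset.Icc 1 N, ρ ^ n) / q ν) * q ν ^ N *
          (∏ n ∈ Finset.Icc 1 N, F^[n] s) ^ ν := by
        rw [Finset.prod_mul_distrib, Finset.prod_mul_distrib, Finset.prod_const, Nat.card_Icc,
          Nat.add_sub_cancel, Finset.sum_div, Real.exp_sum, Finset.prod_pow]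
        ring
    _ ≤ exp ((1 - ρ)⁻¹ / q ν) * q ν ^ N *
          ((p 1 ^ (N + 1).choose 2)⁻¹ * F^[N + 1] s ^ N) ^ ν := by
        gcongr
        exact prod_iterate_pgf_le_inv_pow_mul_pow hp hp1 hs1 N

theorem rpow_neg_mul_mul_succ_div_two {x : ℝ} (hx : 0 ≤ x) (ν N : ℕ) :
    x ^ (-((ν : ℝ) * N * (N + 1)) / 2) = (x ^ (N + 1).choose 2)⁻¹ ^ ν := by
  rw [inv_pow, ← pow_mul, ← Real.rpow_natCast, ← Real.rpow_neg hx]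
  push_cast [Nat.cast_choose_two]
  ring_nf

theorem stmt_8_general
    (p : ℕ → ℝ) (hp0 : p 0 = 0) (hp1 : 0 < p 1) (hp1' : p 1 < 1)
    (hpnn : ∀ k, 0 ≤ p k) (hpsum : ∑' k, p k = 1)
    (f : ℂ → ℂ) (hf : ∀ z : ℂ, ‖z‖ ≤ 1 → f z = ∑' n, (p n : ℂ) * z ^ n)
    (fIter : ℕ → ℂ → ℂ) (hf0 : ∀ z, fIter 0 z = z)
    (hfS : ∀ n z, fIter (n + 1) z = f (fIter n z))
    (q : ℕ → ℝ) (hq0 : q 0 = 0) (hqnn : ∀ k, 0 ≤ q k) (hqsum : ∑' k, q k = 1)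
    (ν : ℕ) (hν : 0 < q ν) (hνmin : ∀ i, 0 < q i → ν ≤ i)
    (h : ℂ → ℂ) (hh : ∀ z : ℂ, ‖z‖ ≤ 1 → h z = ∑' n, (q n : ℂ) * z ^ n)
    (r : ℝ) (hr0 : 0 < r) (hr1 : r < 1) :
    ∃ c : ℝ, 0 < c ∧
      ∀ s : ℝ, 0 < s → s ≤ r → ∀ N : ℕ, 1 ≤ N → ∀ z : ℂ, ‖z‖ ≤ s →
        ‖∏ n ∈ Finset.Icc 1 N, h (fIter n z)‖ ≤
          c * (‖z‖ / s) * q ν ^ N * p 1 ^ (-((ν : ℝ) * N * (N + 1)) / 2) *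
            (fIter (N + 1) (s : ℂ)).re ^ (ν * N) := by
  have hP : IsProbOnPos p := ⟨hpnn, hp0, hpsum⟩
  have hQ : IsProbOnPos q := ⟨hqnn, hq0, hqsum⟩
  have hfIter : ∀ n, fIter n = f^[n] := by
    intro n
    induction n with
    | zero => exact funext hf0
    | succ n ih => funext z; rw [hfS, ih, Function.iterate_succ_apply']
  have hqν : ∀ i < ν, q i = 0 := fun i hi =>
    by_contra fun hne => (hνmin i ((hqnn i).lt_of_ne' hne)).not_gt hi
  set ρ := p 1 + (1 - p 1) * r
  have hρ0 : 0 ≤ ρ := by nlinarith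
  have hρ1 : ρ < 1 := by nlinarith
  refine ⟨exp ((1 - ρ)⁻¹ / q ν), by positivity, fun s hs0 hsr N hN z hz => ?_⟩
  have hs1 : s ≤ 1 := hsr.trans hr1.le
  have hre : (f^[N + 1] (s : ℂ)).re = (pgf p)^[N + 1] s := by
    rw [iterate_apply_eq_of_semiconj_on (e := Complex.ofReal) (hP.mapsTo_pgf le_rfl)
      (fun _ hx => apply_ofReal_eq_pgf hf hx) _ ⟨hs0.le, hs1⟩, Complex.ofReal_re]
  simp only [hfIter]
  rw [hre, rpow_neg_mul_mul_succ_div_two hp1.le]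
  calc ‖∏ n ∈ Finset.Icc 1 N, h (f^[n] z)‖
      ≤ ‖z‖ / s * ∏ n ∈ Finset.Icc 1 N, pgf q ((pgf p)^[n] s) :=
        norm_prod_iterate_le hP hQ hf hh hs0 hs1 (by omega) hz
    _ ≤ ‖z‖ / s * (exp ((1 - ρ)⁻¹ / q ν) * q ν ^ N *
          ((p 1 ^ (N + 1).choose 2)⁻¹ * (pgf p)^[N + 1] s ^ N) ^ ν) :=
        mul_le_mul_of_nonneg_left
          (prod_pgf_comp_iterate_pgf_le hP hp1 hqnn hqsum hν hqν hρ0 hρ1 hr1.le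
            (fun _ hx => hP.pgf_le_mul_self hr1.le hx) ⟨hs0.le, hsr⟩ N) (by positivity)
    _ = _ := by ring

/-- For `r ∈ (0,1)` there is `c > 0` such that for all `s ∈ (0,r]`, `N ≥ 1`,
and `|z| ≤ s`: `|∏_{n=1}^N h(f_n(z))| ≤ c (|z|/s) q_ν^N p₁^{−νN(N+1)/2} f_{N+1}(s)^{νN}`. -/
theorem stmt_8
    (p : ℕ → ℝ) (hp0 : p 0 = 0) (hp1 : 0 < p 1) (hp1' : p 1 < 1)
    (hpnn : ∀ k, 0 ≤ p k) (hpsum : ∑' k, p k = 1)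
    (hmean : Summable fun k : ℕ => (k : ℝ) * p k)
    (a : ℝ) (ha : a = ∑' k : ℕ, (k : ℝ) * p k) (ha1 : 1 < a)
    (f : ℂ → ℂ) (hf : ∀ z : ℂ, ‖z‖ ≤ 1 → f z = ∑' n, (p n : ℂ) * z ^ n)
    (fIter : ℕ → ℂ → ℂ) (hf0 : ∀ z, fIter 0 z = z)
    (hfS : ∀ n z, fIter (n + 1) z = f (fIter n z))
    (q : ℕ → ℝ) (hq0 : q 0 = 0) (hqnn : ∀ k, 0 ≤ q k) (hqsum : ∑' k, q k = 1)
    (ν : ℕ) (hν : 0 < q ν) (hνmin : ∀ i, 0 < q i → ν ≤ i)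
    (h : ℂ → ℂ) (hh : ∀ z : ℂ, ‖z‖ ≤ 1 → h z = ∑' n, (q n : ℂ) * z ^ n)
    (r : ℝ) (hr0 : 0 < r) (hr1 : r < 1) :
    ∃ c : ℝ, 0 < c ∧
      ∀ s : ℝ, 0 < s → s ≤ r → ∀ N : ℕ, 1 ≤ N → ∀ z : ℂ, ‖z‖ ≤ s →
        ‖∏ n ∈ Finset.Icc 1 N, h (fIter n z)‖ ≤
          c * (‖z‖ / s) * q ν ^ N * p 1 ^ (-((ν : ℝ) * N * (N + 1)) / 2) *
            (fIter (N + 1) (s : ℂ)).re ^ (ν * N) :=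
  stmt_8_general p hp0 hp1 hp1' hpnn hpsum f hf fIter hf0 hfS q hq0 hqnn hqsum ν hν hνmin h hh r hr0
    hr1
end

section
/- For every complex number z with Re z ≥ 0, the Laplace transform of the Galton–Watson process with immigration satisfies the functional equation φ_*(z) = h(φ(z)) · φ_*(z/a). -/
/-!
Let `F n`, `G n` be the generating functions of `Z n`, `ZI n`, and `f`, `h` those of the offspring
and immigration laws. Generation `n + 1` is a sum of `N` offspring counts of generation `n`, which
are independent of the past and hence of `N`, so `F (n + 1) = F n ∘ f` and
`G (n + 1) = (G n ∘ f) * h`. By induction, `G (n + 1) u = G n u * h (F (n + 1) u)` on the closed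
unit disc. At `u = exp (-z / a ^ (n + 1))` these are the Laplace transforms of
`ZI (n + 1) / a ^ (n + 1)` at `z`, of `ZI n / a ^ n` at `z / a` and of `Z (n + 1) / a ^ (n + 1)`
at `z`, and dominated convergence yields the functional equation in the limit.
-/

open Filter Topology MeasureTheory ProbabilityTheory

section Integration

variable {Ω β : Type*} {mΩ : MeasurableSpace Ω} {μ : Measure Ω} [MeasurableSpace β]
  [Countable β] [MeasurableSingletonClass β]

lemma Measurable.apply_index {m : MeasurableSpace Ω} {γ : Type*} [MeasurableSpace γ]
    {N : Ω → β} (hN : Measurable[m] N) {f : β → Ω → γ} (hf : ∀ k, Measurable[m] (f k)) :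
    Measurable[m] fun ω => f (N ω) ω :=
  (measurable_from_prod_countable_right (f := fun p : β × Ω => f p.1 p.2) hf).comp
    (hN.prodMk measurable_id)

lemma integral_eq_tsum_setIntegral_preimage {E : Type*} [NormedAddCommGroup E]
    [NormedSpace ℝ E] {N : Ω → β} (hN : Measurable N) {f : Ω → E} (hf : Integrable f μ) :
    ∫ ω, f ω ∂μ = ∑' k, ∫ ω in N ⁻¹' {k}, f ω ∂μ := by
  rw [← integral_iUnion (fun k => hN (measurableSet_singleton k))
    (pairwise_disjoint_fiber N) hf.integrableOn, ← Set.preimage_iUnion,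
    Set.iUnion_of_singleton, Set.preimage_univ, setIntegral_univ]

lemma ProbabilityTheory.Indep.integral_comp_eq_integral_integral [IsFiniteMeasure μ]
    {E : Type*} [NormedAddCommGroup E] [NormedSpace ℝ E] [CompleteSpace E] [MeasurableSpace E]
    [BorelSpace E] [SecondCountableTopology E] {m₁ m₂ : MeasurableSpace Ω} (h₁ : m₁ ≤ mΩ)
    (h₂ : m₂ ≤ mΩ) (hind : Indep m₁ m₂ μ) {N : Ω → β} (hN : Measurable[m₁] N)
    {F : β → Ω → E} (hF : ∀ k, Measurable[m₂] (F k)) {C : ℝ} (hC : ∀ k ω, ‖F k ω‖ ≤ C) :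
    ∫ ω, F (N ω) ω ∂μ = ∫ ω, ∫ ω', F (N ω) ω' ∂μ ∂μ := by
  have hNm : Measurable[mΩ] N := hN.mono h₁ le_rfl
  have hFm k : Measurable[mΩ] (F k) := (hF k).mono h₂ le_rfl
  have hint_left : Integrable (fun ω => F (N ω) ω) μ :=
    .of_bound (hNm.apply_index hFm).aestronglyMeasurable C (.of_forall fun ω => hC _ ω)
  have hint_right : Integrable (fun ω => ∫ ω', F (N ω) ω' ∂μ) μ :=
    .of_bound ((measurable_of_countable fun k => ∫ ω', F k ω' ∂μ).comp hNm).aestronglyMeasurable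
      (C * μ.real Set.univ)
      (.of_forall fun ω => norm_integral_le_of_norm_le_const (.of_forall (hC (N ω))))
  rw [integral_eq_tsum_setIntegral_preimage hNm hint_left,
    integral_eq_tsum_setIntegral_preimage hNm hint_right]
  congr 1 with k
  have hA : MeasurableSet[m₁] (N ⁻¹' {k}) := hN (measurableSet_singleton k)
  calc ∫ ω in N ⁻¹' {k}, F (N ω) ω ∂μ = ∫ ω in N ⁻¹' {k}, F k ω ∂μ :=
        setIntegral_congr_fun (h₁ _ hA) fun ω (hω : N ω = k) => by rw [hω]
    _ = μ.real (N ⁻¹' {k}) • ∫ ω, F k ω ∂μ :=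
        (indep_of_indep_of_le_right hind (hF k).comap_le).setIntegral_eq_smul h₁
          (hFm k).aemeasurable hA (f := id) aestronglyMeasurable_id
    _ = ∫ ω in N ⁻¹' {k}, ∫ ω', F (N ω) ω' ∂μ ∂μ := by
        rw [setIntegral_congr_fun (h₁ _ hA) fun ω (hω : N ω = k) => by rw [hω],
          setIntegral_const]

end Integration

section Transforms

variable {Ω : Type*} {mΩ : MeasurableSpace Ω} {μ : Measure Ω}

lemma norm_integral_pow_le_one [IsProbabilityMeasure μ] (V : Ω → ℕ) {u : ℂ} (hu : ‖u‖ ≤ 1) :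
    ‖∫ ω, u ^ V ω ∂μ‖ ≤ 1 := by
  simpa using norm_integral_le_of_norm_le_const (μ := μ)
    (.of_forall fun ω => (norm_pow u (V ω)).trans_le (pow_le_one₀ (norm_nonneg u) hu))

lemma integrable_pow_comp [IsFiniteMeasure μ] {V : Ω → ℕ} (hV : Measurable V) {u : ℂ}
    (hu : ‖u‖ ≤ 1) : Integrable (fun ω => u ^ V ω) μ :=
  .of_bound ((measurable_from_nat (f := (u ^ ·))).comp hV).aestronglyMeasurable 1
    (.of_forall fun ω => (norm_pow u (V ω)).trans_le (pow_le_one₀ (norm_nonneg u) hu))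

lemma integral_pow_eq_tsum [IsProbabilityMeasure μ] {V : Ω → ℕ} (hV : Measurable V)
    {r : ℕ → ℝ} (hr0 : ∀ k, 0 ≤ r k) (hr : ∀ k, μ {ω | V ω = k} = ENNReal.ofReal (r k))
    {u : ℂ} (hu : ‖u‖ ≤ 1) :
    ∫ ω, u ^ V ω ∂μ = ∑' k, (r k : ℂ) * u ^ k := by
  have hpow : Measurable (u ^ · : ℕ → ℂ) := measurable_from_nat
  rw [← integral_map hV.aemeasurable hpow.aestronglyMeasurable,
    integral_countable ((integrable_map_measure hpow.aestronglyMeasurable hV.aemeasurable).2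
      (integrable_pow_comp hV hu))]
  refine tsum_congr fun k => ?_
  rw [map_measureReal_apply hV (measurableSet_singleton k), measureReal_def]
  simp [Set.preimage, hr, hr0 k, Complex.real_smul]

lemma continuousOn_integral_pow [IsFiniteMeasure μ] {V : Ω → ℕ} (hV : Measurable V) :
    ContinuousOn (fun u : ℂ => ∫ ω, u ^ V ω ∂μ) (Metric.closedBall 0 1) :=
  continuousOn_of_dominated
    (fun u _ => ((measurable_from_nat (f := (u ^ ·))).comp hV).aestronglyMeasurable)
    (fun u hu => .of_forall fun ω => (norm_pow u (V ω)).trans_le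
      (pow_le_one₀ (norm_nonneg u) (mem_closedBall_zero_iff.1 hu)))
    (integrable_const 1) (.of_forall fun ω => (continuous_pow (V ω)).continuousOn)

lemma norm_cexp_neg_mul_le_one {w : ℂ} (hw : 0 ≤ w.re) {x : ℝ} (hx : 0 ≤ x) :
    ‖Complex.exp (-w * x)‖ ≤ 1 := by
  rw [Complex.norm_exp, Real.exp_le_one_iff]
  simpa [Complex.mul_re] using mul_nonneg hw hx

lemma tendsto_integral_cexp_neg_mul [IsFiniteMeasure μ] {w : ℂ} (hw : 0 ≤ w.re)
    {R : ℕ → Ω → ℝ} {L : Ω → ℝ} (hR : ∀ n, AEStronglyMeasurable (R n) μ)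
    (hR0 : ∀ n ω, 0 ≤ R n ω) (hRL : ∀ᵐ ω ∂μ, Tendsto (R · ω) atTop (𝓝 (L ω))) :
    Tendsto (fun n => ∫ ω, Complex.exp (-w * R n ω) ∂μ) atTop
      (𝓝 (∫ ω, Complex.exp (-w * L ω) ∂μ)) :=
  tendsto_integral_of_dominated_convergence (fun _ => 1)
    (fun n => (by fun_prop : Continuous fun x : ℝ => Complex.exp (-w * x)).comp_aestronglyMeasurable
      (hR n))
    (integrable_const 1) (fun n => .of_forall fun ω => norm_cexp_neg_mul_le_one hw (hR0 n ω))
    (hRL.mono fun ω hω => (((Complex.continuous_ofReal.tendsto _).comp hω).const_mul (-w)).cexp)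

lemma tendsto_integral_cexp_neg_mul_div_pow [IsFiniteMeasure μ] {a : ℝ} (ha : 0 < a) {w : ℂ}
    (hw : 0 ≤ w.re) {V : ℕ → Ω → ℕ} (hV : ∀ n, Measurable (V n)) {L : Ω → ℝ}
    (hVL : ∀ᵐ ω ∂μ, Tendsto (fun n => (V n ω : ℝ) / a ^ n) atTop (𝓝 (L ω))) :
    Tendsto (fun n => ∫ ω, Complex.exp (-w * ((V n ω : ℝ) / a ^ n : ℝ)) ∂μ) atTop
      (𝓝 (∫ ω, Complex.exp (-w * L ω) ∂μ)) :=
  tendsto_integral_cexp_neg_mul hw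
    (fun n => ((measurable_from_nat (f := fun k : ℕ => (k : ℝ) / a ^ n)).comp
      (hV n)).aestronglyMeasurable) (fun n ω => by positivity) hVL

end Transforms

section GeneratedSigmaAlgebra

variable {Ω ι β : Type*} {mΩ : MeasurableSpace Ω} {μ : Measure Ω} [MeasurableSpace β]
  {ξ : ι → Ω → β}

abbrev sigmaGen (ξ : ι → Ω → β) (S : Set ι) : MeasurableSpace Ω :=
  ⨆ j ∈ S, MeasurableSpace.comap (ξ j) inferInstance

lemma sigmaGen_le (hξ : ∀ j, Measurable (ξ j)) (S : Set ι) : sigmaGen ξ S ≤ mΩ :=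
  iSup₂_le fun j _ => (hξ j).comap_le

lemma sigmaGen_mono {S T : Set ι} (hST : S ⊆ T) : sigmaGen ξ S ≤ sigmaGen ξ T :=
  biSup_mono hST

lemma measurable_sigmaGen {S : Set ι} {j : ι} (hj : j ∈ S) : Measurable[sigmaGen ξ S] (ξ j) :=
  (measurable_iff_comap_le.2 le_rfl).mono
    (le_biSup (fun j => MeasurableSpace.comap (ξ j) _) hj) le_rfl

lemma ProbabilityTheory.iIndepFun.indep_sigmaGen (hξ : ∀ j, Measurable (ξ j))
    (hind : iIndepFun ξ μ) {S T : Set ι} (hST : Disjoint S T) :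
    Indep (sigmaGen ξ S) (sigmaGen ξ T) μ :=
  indep_iSup_of_disjoint (fun j => (hξ j).comap_le) ((iIndepFun_iff_iIndep _ _ _).1 hind) hST

end GeneratedSigmaAlgebra

lemma ProbabilityTheory.Indep.indepFun {Ω β γ : Type*} {m₁ m₂ mΩ : MeasurableSpace Ω}
    {μ : Measure Ω} [MeasurableSpace β] [MeasurableSpace γ] (hind : Indep m₁ m₂ μ)
    {f : Ω → β} {g : Ω → γ} (hf : Measurable[m₁] f) (hg : Measurable[m₂] g) :
    IndepFun f g μ :=
  (IndepFun_iff_Indep f g μ).2 <|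
    indep_of_indep_of_le_right (indep_of_indep_of_le_left hind hf.comap_le) hg.comap_le

-- Read `G (n + 1) u = G n u * g (F (n + 1) u)` as: the descendants of the first immigrants, and
-- the rest of the population, which evolves like the process started one generation later.
lemma mul_comp_succ_of_recursions {α M : Type*} [CommMonoid M] {D : Set α} {f : α → α}
    {g : α → M} {G : ℕ → α → M} {F : ℕ → α → α} (hf : Set.MapsTo f D D)
    (hG0 : ∀ u ∈ D, G 0 u = g u) (hG : ∀ n, ∀ u ∈ D, G (n + 1) u = G n (f u) * g u)
    (hF0 : ∀ u ∈ D, F 0 u = u) (hF : ∀ n, ∀ u ∈ D, F (n + 1) u = F n (f u)) :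
    ∀ n, ∀ u ∈ D, G (n + 1) u = G n u * g (F (n + 1) u)
  | 0, u, hu => by rw [hG 0 u hu, hG0 _ (hf hu), hF 0 u hu, hF0 _ (hf hu), hG0 u hu, mul_comm]
  | n + 1, u, hu => by
    rw [hG _ u hu, mul_comp_succ_of_recursions hf hG0 hG hF0 hF n _ (hf hu), hF _ u hu,
      hG n u hu, mul_right_comm]

section GaltonWatson

variable {Ω : Type*} {mΩ : MeasurableSpace Ω} {μ : Measure Ω} {X : ℕ → ℕ → Ω → ℕ} {Y : ℕ → Ω → ℕ}

def offspringAndImmigrants (X : ℕ → ℕ → Ω → ℕ) (Y : ℕ → Ω → ℕ) : (ℕ × ℕ) ⊕ ℕ → Ω → ℕ :=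
  Sum.elim (fun ni => X ni.1 ni.2) Y

def pastIndex (n : ℕ) : Set ((ℕ × ℕ) ⊕ ℕ) := {j | Sum.elim (fun mi => mi.1 < n) (· ≤ n) j}

lemma pastIndex_mono {m n : ℕ} (hmn : m ≤ n) : pastIndex m ⊆ pastIndex n := by
  rintro (⟨k, i⟩ | j) hj
  · exact lt_of_lt_of_le hj hmn
  · exact le_trans hj hmn

local notation "𝓟" n => sigmaGen (offspringAndImmigrants X Y) (pastIndex n)

lemma measurable_offspringAndImmigrants (hX : ∀ n i, Measurable (X n i))
    (hY : ∀ j, Measurable (Y j)) : ∀ j, Measurable (offspringAndImmigrants X Y j)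
  | .inl (n, i) => hX n i
  | .inr j => hY j

lemma measurable_randomSum {T : Set ((ℕ × ℕ) ⊕ ℕ)} {n : ℕ} (hpast : pastIndex n ⊆ T)
    (hrow : ∀ i, Sum.inl (n, i) ∈ T) {N : Ω → ℕ} (hN : Measurable[𝓟 n] N) :
    Measurable[sigmaGen (offspringAndImmigrants X Y) T]
      fun ω => ∑ i ∈ Finset.range (N ω), X n i ω :=
  (hN.mono (sigmaGen_mono hpast) le_rfl).apply_index fun _ =>
    Finset.measurable_sum _ fun i _ => measurable_sigmaGen (hrow i)

lemma measurable_galtonWatson {Z : ℕ → Ω → ℕ} (hZ0 : ∀ ω, Z 0 ω = 1)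
    (hZ : ∀ n ω, Z (n + 1) ω = ∑ i ∈ Finset.range (Z n ω), X n i ω) :
    ∀ n, Measurable[𝓟 n] (Z n)
  | 0 => by
    rw [funext hZ0]
    exact measurable_const
  | n + 1 => by
    rw [funext (hZ n)]
    exact measurable_randomSum (pastIndex_mono n.le_succ) (fun i => by simp [pastIndex])
      (measurable_galtonWatson hZ0 hZ n)

lemma measurable_galtonWatsonImmigration {ZI : ℕ → Ω → ℕ} (hZI0 : ∀ ω, ZI 0 ω = Y 0 ω)
    (hZI : ∀ n ω, ZI (n + 1) ω = (∑ i ∈ Finset.range (ZI n ω), X n i ω) + Y (n + 1) ω) :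
    ∀ n, Measurable[𝓟 n] (ZI n)
  | 0 => by
    rw [funext hZI0]
    exact measurable_sigmaGen (ξ := offspringAndImmigrants X Y) (j := .inr 0) (by simp [pastIndex])
  | n + 1 => by
    rw [funext (hZI n)]
    exact (measurable_randomSum (pastIndex_mono n.le_succ) (fun i => by simp [pastIndex])
      (measurable_galtonWatsonImmigration hZI0 hZI n)).add
      (measurable_sigmaGen (ξ := offspringAndImmigrants X Y) (j := .inr (n + 1))
        (by simp [pastIndex]))

variable {f : ℂ → ℂ}

lemma integral_pow_sum_offspring (hX : ∀ n i, Measurable (X n i))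
    (hind : iIndepFun (offspringAndImmigrants X Y) μ)
    (hXf : ∀ n i u, ‖u‖ ≤ 1 → ∫ ω, u ^ X n i ω ∂μ = f u) (n k : ℕ) {u : ℂ} (hu : ‖u‖ ≤ 1) :
    ∫ ω, u ^ (∑ i ∈ Finset.range k, X n i ω) ∂μ = f u ^ k := by
  have hrow : iIndepFun (fun i : Fin k => X n i) μ :=
    hind.precomp (g := fun i : Fin k => Sum.inl (n, (i : ℕ))) fun i j hij => by
      simpa [Fin.ext_iff] using hij
  simp_rw [← Finset.prod_pow_eq_pow_sum, ← Fin.prod_univ_eq_prod_range]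
  rw [hrow.integral_fun_prod_comp (f := fun _ x => u ^ x) (fun i => (hX n i).aemeasurable)
    (fun _ => measurable_from_nat.aestronglyMeasurable)]
  simp [hXf n _ u hu]

lemma integral_pow_randomSum [IsProbabilityMeasure μ] (hX : ∀ n i, Measurable (X n i))
    (hY : ∀ j, Measurable (Y j)) (hind : iIndepFun (offspringAndImmigrants X Y) μ)
    (hXf : ∀ n i u, ‖u‖ ≤ 1 → ∫ ω, u ^ X n i ω ∂μ = f u) {n : ℕ} {N : Ω → ℕ}
    (hN : Measurable[𝓟 n] N) {u : ℂ} (hu : ‖u‖ ≤ 1) :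
    ∫ ω, u ^ (∑ i ∈ Finset.range (N ω), X n i ω) ∂μ = ∫ ω, f u ^ N ω ∂μ := by
  have hξ := measurable_offspringAndImmigrants hX hY
  have hdisj : Disjoint (pastIndex n) (Set.range fun i => Sum.inl (n, i)) := by
    rw [Set.disjoint_right]
    rintro _ ⟨i, rfl⟩
    simp [pastIndex]
  rw [(hind.indep_sigmaGen hξ hdisj).integral_comp_eq_integral_integral (sigmaGen_le hξ _)
    (sigmaGen_le hξ _) hN (F := fun k ω => u ^ ∑ i ∈ Finset.range k, X n i ω)
    (fun k => measurable_from_nat.comp <| Finset.measurable_sum _ fun i _ =>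
      measurable_sigmaGen (ξ := offspringAndImmigrants X Y) (j := .inl (n, i)) ⟨i, rfl⟩)
    (fun k ω => (norm_pow _ _).trans_le (pow_le_one₀ (norm_nonneg u) hu))]
  simp_rw [integral_pow_sum_offspring hX hind hXf n _ hu]

lemma integral_pow_randomSum_add_immigrants [IsProbabilityMeasure μ]
    (hX : ∀ n i, Measurable (X n i)) (hY : ∀ j, Measurable (Y j))
    (hind : iIndepFun (offspringAndImmigrants X Y) μ)
    (hXf : ∀ n i u, ‖u‖ ≤ 1 → ∫ ω, u ^ X n i ω ∂μ = f u) {n : ℕ} {N : Ω → ℕ}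
    (hN : Measurable[𝓟 n] N) {u : ℂ} (hu : ‖u‖ ≤ 1) :
    ∫ ω, u ^ ((∑ i ∈ Finset.range (N ω), X n i ω) + Y (n + 1) ω) ∂μ
      = (∫ ω, f u ^ N ω ∂μ) * ∫ ω, u ^ Y (n + 1) ω ∂μ := by
  have hξ := measurable_offspringAndImmigrants hX hY
  have hindep := hind.indep_sigmaGen hξ (disjoint_compl_left (a := {Sum.inr (n + 1)}))
  have hS : Measurable[sigmaGen (offspringAndImmigrants X Y) {Sum.inr (n + 1)}ᶜ]
      fun ω => u ^ ∑ i ∈ Finset.range (N ω), X n i ω :=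
    measurable_from_nat.comp <| measurable_randomSum
      (fun j hj => by rintro rfl; simp [pastIndex] at hj) (fun i => by simp) hN
  have hI : Measurable[sigmaGen (offspringAndImmigrants X Y) {Sum.inr (n + 1)}]
      fun ω => u ^ Y (n + 1) ω :=
    measurable_from_nat.comp <|
      measurable_sigmaGen (ξ := offspringAndImmigrants X Y) (j := .inr (n + 1)) rfl
  simp_rw [pow_add]
  rw [(hindep.indepFun hS hI).integral_fun_mul_eq_mul_integral
    (hS.mono (sigmaGen_le hξ _) le_rfl).aestronglyMeasurable
    (hI.mono (sigmaGen_le hξ _) le_rfl).aestronglyMeasurable,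
    integral_pow_randomSum hX hY hind hXf hN hu]

lemma integral_pow_galtonWatsonImmigration_succ [IsProbabilityMeasure μ]
    (hX : ∀ n i, Measurable (X n i)) (hY : ∀ j, Measurable (Y j))
    (hind : iIndepFun (offspringAndImmigrants X Y) μ)
    (hXf : ∀ n i u, ‖u‖ ≤ 1 → ∫ ω, u ^ X n i ω ∂μ = f u) {g : ℂ → ℂ}
    (hYg : ∀ j u, ‖u‖ ≤ 1 → ∫ ω, u ^ Y j ω ∂μ = g u)
    {Z : ℕ → Ω → ℕ} (hZ0 : ∀ ω, Z 0 ω = 1)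
    (hZ : ∀ n ω, Z (n + 1) ω = ∑ i ∈ Finset.range (Z n ω), X n i ω)
    {ZI : ℕ → Ω → ℕ} (hZI0 : ∀ ω, ZI 0 ω = Y 0 ω)
    (hZI : ∀ n ω, ZI (n + 1) ω = (∑ i ∈ Finset.range (ZI n ω), X n i ω) + Y (n + 1) ω)
    (n : ℕ) {u : ℂ} (hu : ‖u‖ ≤ 1) :
    ∫ ω, u ^ ZI (n + 1) ω ∂μ = (∫ ω, u ^ ZI n ω ∂μ) * g (∫ ω, u ^ Z (n + 1) ω ∂μ) := by
  refine mul_comp_succ_of_recursions (D := Metric.closedBall 0 1) (f := f) (g := g)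
    (G := fun n v => ∫ ω, v ^ ZI n ω ∂μ) (F := fun n v => ∫ ω, v ^ Z n ω ∂μ)
    (fun v hv => ?_) (fun v hv => ?_) (fun m v hv => ?_) (fun v _ => by simp [hZ0])
    (fun m v hv => ?_) n u (mem_closedBall_zero_iff.2 hu)
  all_goals simp only [mem_closedBall_zero_iff] at hv ⊢
  · rw [← hXf 0 0 v hv]
    exact norm_integral_pow_le_one _ hv
  · simp_rw [hZI0]
    exact hYg 0 v hv
  · simp_rw [hZI m]
    rw [integral_pow_randomSum_add_immigrants hX hY hind hXf
      (measurable_galtonWatsonImmigration hZI0 hZI m) hv, hYg _ v hv]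
  · simp_rw [hZ m]
    exact integral_pow_randomSum hX hY hind hXf (measurable_galtonWatson hZ0 hZ m) hv

end GaltonWatson

lemma integral_cexp_neg_mul_eq_of_genFun {Ω : Type*} [MeasurableSpace Ω] {μ : Measure Ω}
    [IsProbabilityMeasure μ] {a : ℝ} (ha : 0 < a) {V U : ℕ → Ω → ℕ}
    (hV : ∀ n, Measurable (V n)) (hU : ∀ n, Measurable (U n)) {L M : Ω → ℝ}
    (hVL : ∀ᵐ ω ∂μ, Tendsto (fun n => (V n ω : ℝ) / a ^ n) atTop (𝓝 (L ω)))
    (hUM : ∀ᵐ ω ∂μ, Tendsto (fun n => (U n ω : ℝ) / a ^ n) atTop (𝓝 (M ω)))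
    {g : ℂ → ℂ} (hg : ContinuousOn g (Metric.closedBall 0 1))
    (hgen : ∀ n u, ‖u‖ ≤ 1 →
      ∫ ω, u ^ V (n + 1) ω ∂μ = (∫ ω, u ^ V n ω ∂μ) * g (∫ ω, u ^ U (n + 1) ω ∂μ))
    {z : ℂ} (hz : 0 ≤ z.re) :
    ∫ ω, Complex.exp (-z * L ω) ∂μ
      = g (∫ ω, Complex.exp (-z * M ω) ∂μ) * ∫ ω, Complex.exp (-(z / a) * L ω) ∂μ := by
  set u : ℕ → ℂ := fun n => Complex.exp (-z * ((a ^ (n + 1))⁻¹ : ℝ))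
  have hu n : ‖u n‖ ≤ 1 := norm_cexp_neg_mul_le_one hz (by positivity)
  have hpow (n k : ℕ) : u n ^ k = Complex.exp (-z * ((k : ℝ) / a ^ (n + 1) : ℝ)) := by
    rw [← Complex.exp_nat_mul]
    congr 1
    push_cast
    ring
  have hpow' (n k : ℕ) : u n ^ k = Complex.exp (-(z / a) * ((k : ℝ) / a ^ n : ℝ)) := by
    rw [hpow]
    congr 1
    push_cast
    field_simp
    ring
  have hza : 0 ≤ (z / a).re := by
    rw [Complex.div_ofReal_re]
    positivity
  have hlhs : Tendsto (fun n => ∫ ω, u n ^ V (n + 1) ω ∂μ) atTop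
      (𝓝 (∫ ω, Complex.exp (-z * L ω) ∂μ)) := by
    simp_rw [hpow]
    exact (tendsto_integral_cexp_neg_mul_div_pow ha hz hV hVL).comp (tendsto_add_atTop_nat 1)
  have hVn : Tendsto (fun n => ∫ ω, u n ^ V n ω ∂μ) atTop
      (𝓝 (∫ ω, Complex.exp (-(z / a) * L ω) ∂μ)) := by
    simp_rw [hpow']
    exact tendsto_integral_cexp_neg_mul_div_pow ha hza hV hVL
  have hUn : Tendsto (fun n => ∫ ω, u n ^ U (n + 1) ω ∂μ) atTop
      (𝓝 (∫ ω, Complex.exp (-z * M ω) ∂μ)) := by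
    simp_rw [hpow]
    exact (tendsto_integral_cexp_neg_mul_div_pow ha hz hU hUM).comp (tendsto_add_atTop_nat 1)
  have hUn_mem : ∀ n, ∫ ω, u n ^ U (n + 1) ω ∂μ ∈ Metric.closedBall (0 : ℂ) 1 := fun n =>
    mem_closedBall_zero_iff.2 (norm_integral_pow_le_one _ (hu n))
  have hM_mem := Metric.isClosed_closedBall.mem_of_tendsto hUn (.of_forall hUn_mem)
  have hgU := (hg _ hM_mem).tendsto.comp (tendsto_nhdsWithin_iff.2 ⟨hUn, .of_forall hUn_mem⟩)
  refine tendsto_nhds_unique hlhs ?_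
  rw [mul_comm]
  exact (hVn.mul hgU).congr fun n => (hgen n _ (hu n)).symm

theorem stmt_12_general
    (p : ℕ → ℝ) (hpnn : ∀ k, 0 ≤ p k) (a : ℝ) (ha1 : 1 < a)
    (q : ℕ → ℝ) (hqnn : ∀ k, 0 ≤ q k)
    (h : ℂ → ℂ) (hh : ∀ z : ℂ, ‖z‖ ≤ 1 → h z = ∑' n, (q n : ℂ) * z ^ n)
    {Ω : Type} [MeasurableSpace Ω] (μ : Measure Ω) [IsProbabilityMeasure μ]
    (X : ℕ → ℕ → Ω → ℕ) (hXmeas : ∀ n i, Measurable (X n i))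
    (hXdist : ∀ n i k, μ {ω | X n i ω = k} = ENNReal.ofReal (p k))
    (Y : ℕ → Ω → ℕ) (hYmeas : ∀ j, Measurable (Y j))
    (hYdist : ∀ j k, μ {ω | Y j ω = k} = ENNReal.ofReal (q k))
    (hindep : iIndepFun
      (fun i : (ℕ × ℕ) ⊕ ℕ => Sum.elim (fun ni : ℕ × ℕ => X ni.1 ni.2) Y i) μ)
    (Z : ℕ → Ω → ℕ) (hZ0 : ∀ ω, Z 0 ω = 1)
    (hZ : ∀ n ω, Z (n + 1) ω = ∑ i ∈ Finset.range (Z n ω), X n i ω)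
    (W : Ω → ℝ) (hW : ∀ᵐ ω ∂μ, Tendsto (fun n => (Z n ω : ℝ) / a ^ n) atTop (𝓝 (W ω)))
    (ZI : ℕ → Ω → ℕ) (hZI0 : ∀ ω, ZI 0 ω = Y 0 ω)
    (hZI : ∀ n ω, ZI (n + 1) ω =
      (∑ i ∈ Finset.range (ZI n ω), X n i ω) + Y (n + 1) ω)
    (WI : Ω → ℝ) (hWI : ∀ᵐ ω ∂μ, Tendsto (fun n => (ZI n ω : ℝ) / a ^ n) atTop (𝓝 (WI ω)))
    (φ : ℂ → ℂ) (hφ : ∀ z : ℂ, 0 ≤ z.re → φ z = ∫ ω, Complex.exp (-z * (W ω : ℂ)) ∂μ)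
    (φs : ℂ → ℂ) (hφs : ∀ z : ℂ, 0 ≤ z.re → φs z = ∫ ω, Complex.exp (-z * (WI ω : ℂ)) ∂μ) :
    ∀ z : ℂ, 0 ≤ z.re → φs z = h (φ z) * φs (z / (a : ℂ)) := by
  intro z hz
  have ha0 : 0 < a := by linarith
  have hYh j u (hu : ‖u‖ ≤ 1) : ∫ ω, u ^ Y j ω ∂μ = h u := by
    rw [integral_pow_eq_tsum (hYmeas j) hqnn (hYdist j) hu, hh u hu]
  have hgen := integral_pow_galtonWatsonImmigration_succ hXmeas hYmeas hindep
    (fun n i u hu => integral_pow_eq_tsum (hXmeas n i) hpnn (hXdist n i) hu) hYh hZ0 hZ hZI0 hZI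
  have h𝓟 := sigmaGen_le (measurable_offspringAndImmigrants hXmeas hYmeas)
  have hZm n := (measurable_galtonWatson hZ0 hZ n).mono (h𝓟 _) le_rfl
  have hZIm n := (measurable_galtonWatsonImmigration hZI0 hZI n).mono (h𝓟 _) le_rfl
  have hcont : ContinuousOn h (Metric.closedBall 0 1) :=
    (continuousOn_integral_pow (hYmeas 0)).congr fun u hu =>
      (hYh 0 u (mem_closedBall_zero_iff.1 hu)).symm
  rw [hφs z hz, hφ z hz, hφs _ (by rw [Complex.div_ofReal_re]; positivity)]
  exact integral_cexp_neg_mul_eq_of_genFun ha0 hZIm hZm hWI hW hcont hgen hz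

/-- For every complex `z` with `Re z ≥ 0`, the Laplace transform of the
Galton–Watson process with immigration satisfies `φ_*(z) = h(φ(z)) φ_*(z/a)`. -/
theorem stmt_12
    (p : ℕ → ℝ) (hp0 : p 0 = 0) (hp1 : 0 < p 1) (hp1' : p 1 < 1)
    (hpnn : ∀ k, 0 ≤ p k) (hpsum : ∑' k, p k = 1)
    (hmean : Summable fun k : ℕ => (k : ℝ) * p k)
    (a : ℝ) (ha : a = ∑' k : ℕ, (k : ℝ) * p k) (ha1 : 1 < a)
    (hxlogx : Summable fun k : ℕ => p k * k * Real.log k)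
    (q : ℕ → ℝ) (hq0 : q 0 = 0) (hqnn : ∀ k, 0 ≤ q k) (hqsum : ∑' k, q k = 1)
    (hqlog : Summable fun k : ℕ => q k * Real.log k)
    (ν : ℕ) (hν : 0 < q ν) (hνmin : ∀ i, 0 < q i → ν ≤ i)
    (h : ℂ → ℂ) (hh : ∀ z : ℂ, ‖z‖ ≤ 1 → h z = ∑' n, (q n : ℂ) * z ^ n)
    {Ω : Type} [MeasurableSpace Ω] (μ : Measure Ω) [IsProbabilityMeasure μ]
    (X : ℕ → ℕ → Ω → ℕ) (hXmeas : ∀ n i, Measurable (X n i))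
    (hXdist : ∀ n i k, μ {ω | X n i ω = k} = ENNReal.ofReal (p k))
    (Y : ℕ → Ω → ℕ) (hYmeas : ∀ j, Measurable (Y j))
    (hYdist : ∀ j k, μ {ω | Y j ω = k} = ENNReal.ofReal (q k))
    (hindep : iIndepFun
      (fun i : (ℕ × ℕ) ⊕ ℕ => Sum.elim (fun ni : ℕ × ℕ => X ni.1 ni.2) Y i) μ)
    (Z : ℕ → Ω → ℕ) (hZ0 : ∀ ω, Z 0 ω = 1)
    (hZ : ∀ n ω, Z (n + 1) ω = ∑ i ∈ Finset.range (Z n ω), X n i ω)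
    (W : Ω → ℝ) (hWmeas : Measurable W)
    (hW : ∀ᵐ ω ∂μ, Tendsto (fun n => (Z n ω : ℝ) / a ^ n) atTop (𝓝 (W ω)))
    (hWpos : ∀ᵐ ω ∂μ, 0 < W ω)
    (ZI : ℕ → Ω → ℕ) (hZI0 : ∀ ω, ZI 0 ω = Y 0 ω)
    (hZI : ∀ n ω, ZI (n + 1) ω =
      (∑ i ∈ Finset.range (ZI n ω), X n i ω) + Y (n + 1) ω)
    (WI : Ω → ℝ) (hWImeas : Measurable WI)
    (hWI : ∀ᵐ ω ∂μ, Tendsto (fun n => (ZI n ω : ℝ) / a ^ n) atTop (𝓝 (WI ω)))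
    (hWIpos : ∀ᵐ ω ∂μ, 0 < WI ω)
    (φ : ℂ → ℂ) (hφ : ∀ z : ℂ, 0 ≤ z.re → φ z = ∫ ω, Complex.exp (-z * (W ω : ℂ)) ∂μ)
    (φs : ℂ → ℂ) (hφs : ∀ z : ℂ, 0 ≤ z.re → φs z = ∫ ω, Complex.exp (-z * (WI ω : ℂ)) ∂μ) :
    ∀ z : ℂ, 0 ≤ z.re → φs z = h (φ z) * φs (z / (a : ℂ)) :=
  stmt_12_general p hpnn a ha1 q hqnn h hh μ X hXmeas hXdist Y hYmeas hYdist hindep Z hZ0 hZ W hW ZI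
    hZI0 hZI WI hWI φ hφ φs hφs
end
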